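/- arXiv:2308.04548 — 7 statements merged into one kernel-verified Lean document; each statement's English description precedes it below -/
import Mathlib

section
/- Let G be a finite connected bipartite simple graph with bipartition (A,B) and at least two vertices. Then the following are equivalent: (1) A and B are the only minimum vertex covers of G (in particular |A| = |B|); (2) every edge of G belongs to some perfect matching of G. -/
open SimpleGraph

/-- `S` is a vertex cover of `G`: every edge has at least one endpoint in `S`. -/
def IsVertexCover {V : Type*} (G : SimpleGraph V) (S : Set V) : Prop :=
  ∀ ⦃u v : V⦄, G.Adj u v → u ∈ S ∨ v ∈ S

/-- `S` is a minimum vertex cover of `G`. -/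
def IsMinVertexCover {V : Type*} (G : SimpleGraph V) (S : Set V) : Prop :=
  _root_.IsVertexCover G S ∧ ∀ T : Set V, _root_.IsVertexCover G T → S.ncard ≤ T.ncard

/-- `(A, B)` is a bipartition of `G`. -/
def IsBipartition {V : Type*} (G : SimpleGraph V) (A B : Set V) : Prop :=
  Disjoint A B ∧ A ∪ B = Set.univ ∧
    ∀ ⦃u v : V⦄, G.Adj u v → (u ∈ A ∧ v ∈ B) ∨ (u ∈ B ∧ v ∈ A)

/-- The edge `e` belongs to some perfect matching of `G`. -/
def EdgeInSomePM {V : Type*} (G : SimpleGraph V) (e : Sym2 V) : Prop :=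
  ∃ M : G.Subgraph, M.IsPerfectMatching ∧ e ∈ M.edgeSet

/-- A graph is elementary if it is connected and every edge belongs
to some perfect matching. -/
def IsElementary {W : Type*} (H : SimpleGraph W) : Prop :=
  H.Connected ∧ ∀ e ∈ H.edgeSet, EdgeInSomePM H e

/-- `S` is a special subset with respect to the perfect matching `M`:
the union of the endpoints of at least two edges of `M`, equivalently
`|S| ≥ 4` and `S` is closed under taking `M`-partners. -/
def IsSpecialSubset {V : Type*} (G : SimpleGraph V) (M : G.Subgraph) (S : Set V) : Prop :=
  4 ≤ S.ncard ∧ ∀ ⦃v w : V⦄, v ∈ S → M.Adj v w → w ∈ S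

/-- `p` is an `M`-alternating cycle: a cycle whose edges alternately belong
to `M` and to `E(G) \ M`. -/
def IsAlternatingCycle {V : Type*} (G : SimpleGraph V) (M : G.Subgraph) {v : V}
    (p : G.Walk v v) : Prop :=
  p.IsCycle ∧ Even p.length ∧
    ((∀ (i : ℕ) (h : i < p.edges.length), (p.edges.get ⟨i, h⟩ ∈ M.edgeSet ↔ Even i)) ∨
     (∀ (i : ℕ) (h : i < p.edges.length), (p.edges.get ⟨i, h⟩ ∈ M.edgeSet ↔ Odd i)))

/-- The minimum vertex cover number of `G`. -/
noncomputable def mvc {V : Type*} (G : SimpleGraph V) : ℕ :=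
  sInf {n | ∃ S : Set V, _root_.IsVertexCover G S ∧ S.ncard = n}

section Helpers
variable {V : Type*} {G : SimpleGraph V} {A B : Set V}

/-- Build a perfect matching subgraph from a fixed-point-free adjacency involution. -/
def matchingOfInvolution (G : SimpleGraph V) (m : V → V) (hadj : ∀ v, G.Adj v (m v))
    (hinv : ∀ v, m (m v) = v) : G.Subgraph where
  verts := Set.univ
  Adj u v := m u = v
  adj_sub := fun {u v} h => h ▸ hadj u
  edge_vert := fun _ => Set.mem_univ _
  symm := ⟨fun u v (h : m u = v) => by rw [← h]; exact hinv u⟩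

lemma matchingOfInvolution_isPM (G : SimpleGraph V) (m : V → V) (hadj : ∀ v, G.Adj v (m v))
    (hinv : ∀ v, m (m v) = v) : (matchingOfInvolution G m hadj hinv).IsPerfectMatching :=
  ⟨fun v _ => ⟨m v, rfl, fun _ hw => Eq.symm hw⟩, fun v => Set.mem_univ v⟩

lemma matchingOfInvolution_adj (G : SimpleGraph V) (m : V → V) (hadj : ∀ v, G.Adj v (m v))
    (hinv : ∀ v, m (m v) = v) {u v : V} (h : m u = v) :
    (matchingOfInvolution G m hadj hinv).Adj u v := h

/-- From a perfect matching, extract the partner involution. -/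
lemma exists_partner {M : G.Subgraph} (hM : M.IsPerfectMatching) :
    ∃ m : V → V, (∀ v, M.Adj v (m v)) ∧ (∀ v, m (m v) = v) ∧
      (∀ ⦃v w : V⦄, M.Adj v w → m v = w) := by
  choose m hm hu using fun v => hM.1 (hM.2 v)
  have huniq : ∀ ⦃v w : V⦄, M.Adj v w → m v = w := fun v w h => (hu v w h).symm
  exact ⟨m, hm, fun v => huniq (M.adj_symm (hm v)), huniq⟩

lemma IsBipartition.mem_B {hbip : IsBipartition G A B} {u v : V} (hu : u ∈ A)
    (huv : G.Adj u v) : v ∈ B := by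
  rcases hbip.2.2 huv with ⟨_, h⟩ | ⟨h, _⟩
  · exact h
  · exact absurd hu (Set.disjoint_right.mp hbip.1 h)

lemma IsBipartition.not_mem_both {hbip : IsBipartition G A B} {v : V} (h1 : v ∈ A)
    (h2 : v ∈ B) : False := Set.disjoint_left.mp hbip.1 h1 h2

lemma IsBipartition.mem_or {hbip : IsBipartition G A B} (v : V) : v ∈ A ∨ v ∈ B :=
  (Set.mem_union v A B).mp (hbip.2.1.symm ▸ Set.mem_univ v)

/-- Any vertex cover has size at least `|A|`, given a perfect matching partner function. -/
lemma ncard_A_le_cover [Fintype V] (hbip : IsBipartition G A B) {m : V → V}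
    (hadj : ∀ v, G.Adj v (m v)) (hinv : ∀ v, m (m v) = v) {T : Set V}
    (hT : _root_.IsVertexCover G T) : A.ncard ≤ T.ncard := by
  classical
  apply Set.ncard_le_ncard_of_injOn (fun a => if a ∈ T then a else m a)
  · intro a _
    by_cases h : a ∈ T
    · simpa [h]
    · rcases hT (hadj a) with h' | h'
      · exact absurd h' h
      · simpa [h]
  · intro x hx y hy hxy
    simp only at hxy
    have hxB : m x ∈ B := hbip.mem_B hx (hadj x)
    have hyB : m y ∈ B := hbip.mem_B hy (hadj y)
    split_ifs at hxy with h1 h2 h2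
    · exact hxy
    · rw [hxy] at hx
      exact (hbip.not_mem_both hx hyB).elim
    · rw [← hxy] at hy
      exact (hbip.not_mem_both hy hxB).elim
    · have := congrArg m hxy
      rwa [hinv, hinv] at this

/-- If moreover the cover `S` has size at most `|A|`, then each matching edge has exactly
one endpoint in `S`. -/
lemma partner_not_mem [Fintype V] (hbip : IsBipartition G A B) {m : V → V}
    (hadj : ∀ v, G.Adj v (m v)) (hinv : ∀ v, m (m v) = v) {S : Set V}
    (hS : _root_.IsVertexCover G S) (hcard : S.ncard ≤ A.ncard) {v : V} (hv : v ∈ A)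
    (hvS : v ∈ S) : m v ∉ S := by
  classical
  intro hmvS
  have hsurj := Set.surj_on_of_inj_on_of_ncard_le (s := A) (t := S)
    (fun a _ => if a ∈ S then a else m a) ?_ ?_ hcard S.toFinite
  · obtain ⟨a, ha, hae⟩ := hsurj (m v) hmvS
    have hmvB : m v ∈ B := hbip.mem_B hv (hadj v)
    by_cases h : a ∈ S
    · rw [if_pos h] at hae
      exact hbip.not_mem_both (hae ▸ ha) hmvB
    · rw [if_neg h] at hae
      have : v = a := by
        have := congrArg m hae
        rwa [hinv, hinv] at this
      exact h (this ▸ hvS)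
  · intro a ha
    by_cases h : a ∈ S
    · simpa [h]
    · rcases hS (hadj a) with h' | h'
      · exact absurd h' h
      · simpa [h]
  · intro x y hx hy hxy
    have hxB : m x ∈ B := hbip.mem_B hx (hadj x)
    have hyB : m y ∈ B := hbip.mem_B hy (hadj y)
    split_ifs at hxy with h1 h2 h2
    · exact hxy
    · rw [hxy] at hx
      exact (hbip.not_mem_both hx hyB).elim
    · rw [← hxy] at hy
      exact (hbip.not_mem_both hy hxB).elim
    · have := congrArg m hxy
      rwa [hinv, hinv] at this

lemma exists_crossing {U : Set V} {u v : V} (p : G.Walk u v) (hu : u ∈ U) (hv : v ∉ U) :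
    ∃ x y, G.Adj x y ∧ x ∈ U ∧ y ∉ U := by
  induction p with
  | nil => exact absurd hu hv
  | @cons a b c h p ih =>
    by_cases hb : b ∈ U
    · exact ih hb hv
    · exact ⟨a, b, h, hu, hb⟩

end Helpers
section Hall
variable {V : Type*} {G : SimpleGraph V} {A B : Set V}

lemma exists_pm_through [Fintype V] (hbip : IsBipartition G A B)
    (hminA : IsMinVertexCover G A) (hABcard : A.ncard = B.ncard)
    (huniq : ∀ S : Set V, IsMinVertexCover G S → S = A ∨ S = B)
    {a b : V} (hab : G.Adj a b) (ha : a ∈ A) (hb : b ∈ B) :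
    ∃ M : G.Subgraph, M.IsPerfectMatching ∧ M.Adj a b := by
  classical
  set t : ↥(A \ {a}) → Finset V :=
    fun x => (Set.toFinite (G.neighborSet (x : V) \ {b})).toFinset with ht
  have hmemt : ∀ (x : ↥(A \ {a})) (v : V), v ∈ t x ↔ G.Adj (x : V) v ∧ v ≠ b := by
    intro x v
    rw [Set.Finite.mem_toFinset, Set.mem_diff, Set.mem_singleton_iff,
      SimpleGraph.mem_neighborSet]
  -- Hall's condition, using that `A` is a minimum vertex cover and uniqueness
  have hall : ∀ s : Finset ↥(A \ {a}), s.card ≤ (s.biUnion t).card := by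
    intro s
    by_contra hlt
    push_neg at hlt
    set Sv : Finset V := s.image Subtype.val with hSv
    have hSvcard : Sv.card = s.card := Finset.card_image_of_injective s Subtype.val_injective
    have hSvsub : (Sv : Set V) ⊆ A \ {a} := by
      intro u hu
      obtain ⟨x, _, rfl⟩ := Finset.mem_image.mp hu
      exact x.2
    have hSvA : (Sv : Set V) ⊆ A := hSvsub.trans Set.diff_subset
    set N : Finset V := s.biUnion t with hN
    set T : Set V := ((A \ ↑Sv) ∪ ↑N) ∪ {b} with hT
    have hTcover : _root_.IsVertexCover G T := by
      have key : ∀ u v : V, G.Adj u v → u ∈ A → v ∈ B → u ∈ T ∨ v ∈ T := by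
        intro u v huv hu hv
        by_cases hus : u ∈ Sv
        · obtain ⟨x, hx, rfl⟩ := Finset.mem_image.mp hus
          by_cases hvb : v = b
          · exact Or.inr (Or.inr (by simp [hvb]))
          · refine Or.inr (Or.inl (Or.inr ?_))
            exact Finset.mem_coe.mpr
              (Finset.mem_biUnion.mpr ⟨x, hx, (hmemt x v).mpr ⟨huv, hvb⟩⟩)
        · exact Or.inl (Or.inl (Or.inl ⟨hu, hus⟩))
      intro u v huv
      rcases hbip.2.2 huv with ⟨hu, hv⟩ | ⟨hu, hv⟩
      · exact key u v huv hu hv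
      · exact (key v u huv.symm hv hu).symm
    have hdiff : (A \ ↑Sv).ncard = A.ncard - Sv.card := by
      rw [Set.ncard_diff hSvA (Set.toFinite _), Set.ncard_coe_finset]
    have hSvle : Sv.card ≤ A.ncard := by
      rw [← Set.ncard_coe_finset]
      exact Set.ncard_le_ncard hSvA A.toFinite
    have hTle : T.ncard ≤ A.ncard := by
      calc T.ncard ≤ ((A \ ↑Sv) ∪ ↑N).ncard + ({b} : Set V).ncard := Set.ncard_union_le _ _
        _ ≤ (A \ ↑Sv).ncard + (↑N : Set V).ncard + 1 := by
            rw [Set.ncard_singleton]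
            exact add_le_add_left (Set.ncard_union_le _ _) 1
        _ ≤ A.ncard := by
            rw [hdiff, Set.ncard_coe_finset]
            omega
    have hTmin : IsMinVertexCover G T :=
      ⟨hTcover, fun U hU => le_trans hTle (hminA.2 U hU)⟩
    rcases huniq T hTmin with hTA | hTB
    · have hbT : b ∈ T := Or.inr rfl
      rw [hTA] at hbT
      exact hbip.not_mem_both hbT hb
    · have haT : a ∈ T := Or.inl (Or.inl ⟨ha, fun h => (hSvsub h).2 rfl⟩)
      rw [hTB] at haT
      exact hbip.not_mem_both ha haT
  obtain ⟨f, hfinj, hf⟩ := (Finset.all_card_le_biUnion_card_iff_exists_injective t).mp hall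
  have hfadj : ∀ x : ↥(A \ {a}), G.Adj (x : V) (f x) := fun x => ((hmemt x (f x)).mp (hf x)).1
  have hfB : ∀ x : ↥(A \ {a}), f x ∈ B \ {b} :=
    fun x => ⟨hbip.mem_B x.2.1 (hfadj x), ((hmemt x (f x)).mp (hf x)).2⟩
  set f' : ↥(A \ {a}) → ↥(B \ {b}) := fun x => ⟨f x, hfB x⟩ with hf'
  have hf'inj : Function.Injective f' := fun x y h => hfinj (congrArg Subtype.val h)
  have hcards : Nat.card ↥(A \ {a}) = Nat.card ↥(B \ {b}) := by
    rw [Nat.card_coe_set_eq, Nat.card_coe_set_eq,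
      Set.ncard_diff_singleton_of_mem ha,
      Set.ncard_diff_singleton_of_mem hb, hABcard]
  have hbij : Function.Bijective f' :=
    (Nat.bijective_iff_injective_and_card f').mpr ⟨hf'inj, hcards⟩
  set g := Equiv.ofBijective f' hbij with hg
  have hgadj : ∀ x : ↥(A \ {a}), G.Adj (x : V) ((g x : V)) := fun x => hfadj x
  have hgsymm : ∀ y : ↥(B \ {b}), G.Adj ((g.symm y : V)) (y : V) := by
    intro y
    have := hgadj (g.symm y)
    rwa [Equiv.apply_symm_apply] at this
  set m : V → V := fun v =>
    if hv : v ∈ A then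
      if hva : v = a then b
      else (g ⟨v, Set.mem_diff_singleton.mpr ⟨hv, hva⟩⟩ : V)
    else
      if hvb : v = b then a
      else (g.symm ⟨v, Set.mem_diff_singleton.mpr
        ⟨(hbip.mem_or v).resolve_left hv, hvb⟩⟩ : V) with hm
  have hma : m a = b := by
    simp only [m]
    rw [dif_pos ha]
    simp
  have hmb : m b = a := by
    simp only [m]
    rw [dif_neg (fun h => hbip.not_mem_both h hb)]
    simp
  have hmA : ∀ (v) (hv : v ∈ A) (hva : ¬ v = a),
      m v = (g ⟨v, Set.mem_diff_singleton.mpr ⟨hv, hva⟩⟩ : V) := by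
    intro v hv hva
    simp only [m]
    rw [dif_pos hv, dif_neg hva]
  have hmB : ∀ (v) (hv : v ∉ A) (hvb : ¬ v = b),
      m v = (g.symm ⟨v, Set.mem_diff_singleton.mpr
        ⟨(hbip.mem_or v).resolve_left hv, hvb⟩⟩ : V) := by
    intro v hv hvb
    simp only [m]
    rw [dif_neg hv, dif_neg hvb]
  have hadjm : ∀ v, G.Adj v (m v) := by
    intro v
    by_cases hv : v ∈ A
    · by_cases hva : v = a
      · subst hva; rw [hma]; exact hab
      · rw [hmA v hv hva]
        exact hgadj ⟨v, Set.mem_diff_singleton.mpr ⟨hv, hva⟩⟩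
    · by_cases hvb : v = b
      · subst hvb; rw [hmb]; exact hab.symm
      · rw [hmB v hv hvb]
        exact (hgsymm ⟨v, Set.mem_diff_singleton.mpr ⟨(hbip.mem_or v).resolve_left hv, hvb⟩⟩).symm
  have hinvm : ∀ v, m (m v) = v := by
    intro v
    by_cases hv : v ∈ A
    · by_cases hva : v = a
      · subst hva; rw [hma, hmb]
      · rw [hmA v hv hva]
        set x : ↥(A \ {a}) := ⟨v, Set.mem_diff_singleton.mpr ⟨hv, hva⟩⟩ with hx
        have hnA : (g x : V) ∉ A := fun h => hbip.not_mem_both h (g x).2.1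
        have hnb : ¬ (g x : V) = b := (g x).2.2
        rw [hmB _ hnA hnb, Subtype.coe_eta, Equiv.symm_apply_apply]
    · by_cases hvb : v = b
      · subst hvb; rw [hmb, hma]
      · rw [hmB v hv hvb]
        set y : ↥(B \ {b}) := ⟨v, Set.mem_diff_singleton.mpr
          ⟨(hbip.mem_or v).resolve_left hv, hvb⟩⟩ with hy
        have hmem : (g.symm y : V) ∈ A := (g.symm y).2.1
        have hna : ¬ (g.symm y : V) = a := (g.symm y).2.2
        rw [hmA _ hmem hna, Subtype.coe_eta, Equiv.apply_symm_apply]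
  exact ⟨matchingOfInvolution G m hadjm hinvm,
    matchingOfInvolution_isPM G m hadjm hinvm, hma⟩

end Hall

/-- For a finite connected bipartite graph `G` with bipartition `(A,B)` and at
least two vertices, `A` and `B` are the only minimum vertex covers of `G` iff
every edge of `G` belongs to some perfect matching of `G`. -/
theorem stmt0 {V : Type*} [Fintype V] (G : SimpleGraph V) (A B : Set V)
    (hbip : IsBipartition G A B) (hconn : G.Connected)
    (hcard : 2 ≤ Fintype.card V) :
    (∀ S : Set V, IsMinVertexCover G S ↔ (S = A ∨ S = B)) ↔
      (∀ e ∈ G.edgeSet, EdgeInSomePM G e) := by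
  classical
  have hbipBA : IsBipartition G B A :=
    ⟨hbip.1.symm, (Set.union_comm B A).trans hbip.2.1, fun u v h => Or.symm (hbip.2.2 h)⟩
  constructor
  · -- uniqueness of minimum vertex covers implies every edge is in a perfect matching
    intro huniq e he
    have hminA : IsMinVertexCover G A := (huniq A).mpr (Or.inl rfl)
    have hminB : IsMinVertexCover G B := (huniq B).mpr (Or.inr rfl)
    have hABcard : A.ncard = B.ncard :=
      le_antisymm (hminA.2 B hminB.1) (hminB.2 A hminA.1)
    have hBAcard : B.ncard = A.ncard := hABcard.symm
    have huniq' : ∀ S, IsMinVertexCover G S → S = A ∨ S = B := fun S hS => (huniq S).mp hS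
    have huniqBA : ∀ S, IsMinVertexCover G S → S = B ∨ S = A :=
      fun S hS => (huniq' S hS).symm
    revert he
    induction e using Sym2.ind with
    | _ x y =>
      intro he
      rw [SimpleGraph.mem_edgeSet] at he
      rcases hbip.2.2 he with ⟨hx, hy⟩ | ⟨hx, hy⟩
      · obtain ⟨M, hM, hadj⟩ := exists_pm_through hbip hminA hABcard huniq' he hx hy
        exact ⟨M, hM, SimpleGraph.Subgraph.mem_edgeSet.mpr hadj⟩
      · obtain ⟨M, hM, hadj⟩ := exists_pm_through hbipBA hminB hBAcard huniqBA he hx hy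
        exact ⟨M, hM, SimpleGraph.Subgraph.mem_edgeSet.mpr hadj⟩
  · -- every edge is in a perfect matching implies uniqueness of minimum vertex covers
    intro hpm S
    -- `G` has an edge
    obtain ⟨u, w, huw⟩ : ∃ u w : V, G.Adj u w := by
      obtain ⟨u, w, hne⟩ := Fintype.exists_pair_of_one_lt_card (α := V) (by omega)
      obtain ⟨p⟩ := hconn.preconnected u w
      cases p with
      | nil => exact absurd rfl hne
      | cons h _ => exact ⟨_, _, h⟩
    obtain ⟨M0, hM0, -⟩ := hpm s(u, w) (G.mem_edgeSet.mpr huw)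
    obtain ⟨m0, hm0adj, hm0inv, -⟩ := exists_partner hM0
    have hm0G : ∀ v, G.Adj v (m0 v) := fun v => M0.adj_sub (hm0adj v)
    have hm0injOn : ∀ (X : Set V), Set.InjOn m0 X := by
      intro X x hx y hy hxy
      have := congrArg m0 hxy
      rwa [hm0inv, hm0inv] at this
    have hABcard : A.ncard = B.ncard := by
      apply le_antisymm
      · exact Set.ncard_le_ncard_of_injOn m0 (fun v hv => hbip.mem_B hv (hm0G v))
          (hm0injOn A) B.toFinite
      · exact Set.ncard_le_ncard_of_injOn m0 (fun v hv => hbipBA.mem_B hv (hm0G v))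
          (hm0injOn B) A.toFinite
    have hAcov : _root_.IsVertexCover G A := by
      intro u v h
      rcases hbip.2.2 h with ⟨h1, _⟩ | ⟨_, h2⟩
      · exact Or.inl h1
      · exact Or.inr h2
    have hBcov : _root_.IsVertexCover G B := by
      intro u v h
      rcases hbip.2.2 h with ⟨_, h2⟩ | ⟨h1, _⟩
      · exact Or.inr h2
      · exact Or.inl h1
    have hminA : IsMinVertexCover G A :=
      ⟨hAcov, fun T hT => ncard_A_le_cover hbip hm0G hm0inv hT⟩
    have hminB : IsMinVertexCover G B :=
      ⟨hBcov, fun T hT => ncard_A_le_cover hbipBA hm0G hm0inv hT⟩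
    constructor
    · intro hS
      by_contra hne
      push_neg at hne
      have hSA : S.ncard = A.ncard :=
        le_antisymm (hS.2 A hAcov) (ncard_A_le_cover hbip hm0G hm0inv hS.1)
      have hSB : S.ncard = B.ncard := hSA.trans hABcard
      -- every edge of `G` has exactly one endpoint in `S`
      have hexact : ∀ ⦃x y : V⦄, G.Adj x y → x ∈ S → y ∈ S → False := by
        intro x y hxy hxS hyS
        obtain ⟨M, hM, heM⟩ := hpm s(x, y) (G.mem_edgeSet.mpr hxy)
        obtain ⟨m, hmadj, hminv, hmuniq⟩ := exists_partner hM
        have hmG : ∀ v, G.Adj v (m v) := fun v => M.adj_sub (hmadj v)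
        have hMxy : M.Adj x y := SimpleGraph.Subgraph.mem_edgeSet.mp heM
        have hmx : m x = y := hmuniq hMxy
        rcases hbip.2.2 hxy with ⟨hx, _⟩ | ⟨hx, _⟩
        · exact partner_not_mem hbip hmG hminv hS.1 hSA.le hx hxS (hmx.symm ▸ hyS)
        · exact partner_not_mem hbipBA hmG hminv hS.1 hSB.le hx hxS (hmx.symm ▸ hyS)
      -- pieces of the partition are nonempty
      obtain ⟨a1, ha1⟩ : (A ∩ S).Nonempty := by
        rw [Set.nonempty_iff_ne_empty]
        intro hemp
        apply hne.2
        apply Set.eq_of_subset_of_ncard_le ?_ (hSB.ge) B.toFinite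
        intro s hs
        rcases hbip.mem_or s with h | h
        · exact absurd (Set.mem_inter h hs) (hemp ▸ Set.notMem_empty s)
        · exact h
      obtain ⟨a2, ha2⟩ : (A \ S).Nonempty := by
        rw [Set.nonempty_iff_ne_empty]
        intro hemp
        apply hne.1
        refine (Set.eq_of_subset_of_ncard_le ?_ hSA.le S.toFinite).symm
        intro s hs
        by_contra h
        exact (hemp ▸ Set.notMem_empty s) ⟨hs, h⟩
      set U : Set V := (A ∩ S) ∪ (B \ S) with hU
      have ha1U : a1 ∈ U := Or.inl ha1
      have ha2U : a2 ∉ U := by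
        rintro (h | h)
        · exact ha2.2 h.2
        · exact hbip.not_mem_both ha2.1 h.1
      obtain ⟨p⟩ := hconn.preconnected a1 a2
      obtain ⟨x, y, hxy, hxU, hyU⟩ := exists_crossing p ha1U ha2U
      rcases hbip.2.2 hxy with ⟨hx, hy⟩ | ⟨hx, hy⟩
      · have hxS : x ∈ S := by
          rcases hxU with h | h
          · exact h.2
          · exact (hbip.not_mem_both hx h.1).elim
        have hyS : y ∈ S := by
          by_contra h
          exact hyU (Or.inr ⟨hy, h⟩)
        exact hexact hxy hxS hyS
      · have hxS : x ∉ S := by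
          rcases hxU with h | h
          · exact (hbip.not_mem_both h.1 hx).elim
          · exact h.2
        have hyS : y ∉ S := fun h => hyU (Or.inl ⟨hy, h⟩)
        rcases hS.1 hxy with h | h
        · exact hxS h
        · exact hyS h
    · rintro (rfl | rfl)
      · exact hminA
      · exact hminB
end

section
/- Let G be a finite bipartite simple graph on at least four vertices that contains a Hamiltonian cycle (a cycle passing through every vertex exactly once). Then every edge of G belongs to some perfect matching of G. -/
set_option maxHeartbeats 2000000

open SimpleGraph

/-- The index-pairing function used to build the perfect matching:
`0` is paired with `k`, and the remaining indices are paired consecutively. -/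
def auxf (k i : ℕ) : ℕ :=
  if i = 0 then k else if i = k then 0
  else if i < k then (if i % 2 = 1 then i + 1 else i - 1)
  else (if i % 2 = 0 then i + 1 else i - 1)

lemma auxf_cases (k i : ℕ) :
    (i = 0 ∧ auxf k i = k) ∨ (i = k ∧ auxf k i = 0) ∨
    (i ≠ 0 ∧ i ≠ k ∧ i < k ∧ i % 2 = 1 ∧ auxf k i = i + 1) ∨
    (i ≠ 0 ∧ i ≠ k ∧ i < k ∧ i % 2 = 0 ∧ auxf k i = i - 1) ∨
    (i ≠ 0 ∧ i ≠ k ∧ k < i ∧ i % 2 = 0 ∧ auxf k i = i + 1) ∨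
    (i ≠ 0 ∧ i ≠ k ∧ k < i ∧ i % 2 = 1 ∧ auxf k i = i - 1) := by
  unfold auxf; split_ifs <;> omega

lemma auxf_lt {n k i : ℕ} (hk : k % 2 = 1) (hn : n % 2 = 0) (hkn : k < n) (hi : i < n) :
    auxf k i < n := by
  have := auxf_cases k i; omega

lemma auxf_invol {n k i : ℕ} (hk : k % 2 = 1) (hn : n % 2 = 0) (hkn : k < n) (hi : i < n) :
    auxf k (auxf k i) = i := by
  have h1 := auxf_cases k i
  have h2 := auxf_cases k (auxf k i)
  omega

lemma aux_support_get {V : Type*} {G : SimpleGraph V} {u v : V} (p : G.Walk u v) (i : ℕ)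
    (h : i < p.support.length) : p.support.get ⟨i, h⟩ = p.getVert i := by
  induction p generalizing i with
  | nil => simp at h; subst h; rfl
  | cons ha q ih =>
    cases i with
    | zero => rfl
    | succ j => simpa using ih j (by simpa using h)

lemma aux_ham_rotate {V : Type*} [DecidableEq V] {G : SimpleGraph V} {a u : V} {p : G.Walk a a}
    (hp : p.IsHamiltonianCycle) (hu : u ∈ p.support) : (p.rotate u hu).IsHamiltonianCycle := by
  rw [SimpleGraph.Walk.isHamiltonianCycle_iff_isCycle_and_support_count_tail_eq_one] at hp ⊢
  exact ⟨hp.1.rotate hu, fun b => by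
    rw [List.IsRotated.perm (p.support_rotate u hu) |>.count_eq]; exact hp.2 b⟩

/-- A finite bipartite graph on at least four vertices with a Hamiltonian cycle
has every edge in some perfect matching. -/
theorem stmt2 {V : Type*} [Fintype V] [DecidableEq V] (G : SimpleGraph V)
    (hbip : ∃ A B : Set V, IsBipartition G A B)
    (hcard : 4 ≤ Fintype.card V)
    (hham : ∃ (a : V) (p : G.Walk a a), p.IsHamiltonianCycle) :
    ∀ e ∈ G.edgeSet, EdgeInSomePM G e := by
  obtain ⟨A, B, hdisj, hunion, hAB⟩ := hbip
  obtain ⟨a, p0, hp0⟩ := hham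
  have hBA : ∀ w : V, w ∈ B ↔ w ∉ A := by
    intro w
    constructor
    · intro hB hA; exact (Set.disjoint_left.mp hdisj hA) hB
    · intro hA
      have hw : w ∈ A ∪ B := by rw [hunion]; trivial
      exact hw.resolve_left hA
  intro e he
  induction e with
  | _ u v =>
  rw [SimpleGraph.mem_edgeSet] at he
  have hu : u ∈ p0.support := hp0.mem_support u
  set q : G.Walk u u := p0.rotate u hu with hqdef
  have hq : q.IsHamiltonianCycle := aux_ham_rotate hp0 hu
  set n : ℕ := q.length with hndef
  have hn : n = Fintype.card V := hq.length_eq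
  have hn4 : 4 ≤ n := hn ▸ hcard
  set x : ℕ → V := q.getVert with hxdef
  have hx0 : x 0 = u := q.getVert_zero
  have hxn : x n = u := q.getVert_length
  have hadjx : ∀ i, i < n → G.Adj (x i) (x (i + 1)) := fun i hi => q.adj_getVert_succ hi
  -- injectivity of `x` on `[0, n)`
  have hnd : q.support.tail.Nodup := hq.isCycle.support_nodup
  have hinj1 : ∀ i j, 1 ≤ i → i ≤ n → 1 ≤ j → j ≤ n → x i = x j → i = j := by
    intro i j hi1 hin hj1 hjn hxy
    have hlt : q.support.tail.length = n := by
      simp [SimpleGraph.Walk.length_support]; rfl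
    have hi' : i - 1 < q.support.tail.length := by omega
    have hj' : j - 1 < q.support.tail.length := by omega
    have e1 : q.support.tail.get ⟨i - 1, hi'⟩ = x i := by
      rw [List.get_tail, aux_support_get]
      congr 1; omega
    have e2 : q.support.tail.get ⟨j - 1, hj'⟩ = x j := by
      rw [List.get_tail, aux_support_get]
      congr 1; omega
    have h3 := (hnd.get_inj_iff).mp (e1.trans (hxy.trans e2.symm))
    have h4 := Fin.mk.injEq (i-1) hi' (j-1) hj' ▸ h3
    omega
  have hinj : ∀ i j, i < n → j < n → x i = x j → i = j := by
    intro i j hi hj hxy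
    rcases Nat.eq_zero_or_pos i with rfl | hi1
    · rcases Nat.eq_zero_or_pos j with rfl | hj1
      · rfl
      · have := hinj1 n j (by omega) le_rfl hj1 (by omega) (by rw [hxn, ← hx0, hxy])
        omega
    · rcases Nat.eq_zero_or_pos j with rfl | hj1
      · have := hinj1 i n hi1 (by omega) (by omega) le_rfl (by rw [hxn, ← hx0, ← hxy])
        omega
      · exact hinj1 i j hi1 (by omega) hj1 (by omega) hxy
  -- surjectivity of `x` on `[0, n)`
  have hsurj : ∀ w : V, ∃ i, i < n ∧ x i = w := by
    intro w
    obtain ⟨i, hiw, hile⟩ := (SimpleGraph.Walk.mem_support_iff_exists_getVert).mp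
      (hq.mem_support w)
    have hiw' : x i = w := hiw
    rcases Nat.lt_or_ge i n with h | h
    · exact ⟨i, h, hiw'⟩
    · have hieq : i = n := le_antisymm hile h
      exact ⟨0, by omega, by rw [hx0, ← hxn, ← hieq, hiw']⟩
  -- parity along the cycle
  have hpar : ∀ i, i ≤ n → (x i ∈ A ↔ (u ∈ A ↔ Even i)) := by
    intro i
    induction i with
    | zero => intro _; rw [hx0]; simp
    | succ j ih =>
      intro hjn
      have hj := ih (by omega)
      have hadj := hadjx j (by omega)
      have hstep : x (j+1) ∈ A ↔ ¬ (x j ∈ A) := by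
        rcases hAB hadj with ⟨h1, h2⟩ | ⟨h1, h2⟩
        · rw [hBA] at h2; tauto
        · rw [hBA] at h1; tauto
      rw [hstep, hj, Nat.even_add_one]
      tauto
  have hneven : Even n := by
    have := hpar n le_rfl
    rw [hxn] at this
    tauto
  have hnmod : n % 2 = 0 := Nat.even_iff.mp hneven
  -- the index `k` of `v`
  have hvne : u ≠ v := G.ne_of_adj he
  obtain ⟨k, hkn, hkv⟩ := hsurj v
  have hk0 : k ≠ 0 := by
    intro h; subst h; rw [hx0] at hkv; exact hvne hkv
  have hkodd : ¬ Even k := by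
    intro hke
    have h1 := hpar k (by omega)
    rw [hkv] at h1
    have hdiff : v ∈ A ↔ ¬ (u ∈ A) := by
      rcases hAB he with ⟨h2, h3⟩ | ⟨h2, h3⟩
      · rw [hBA] at h3; tauto
      · rw [hBA] at h2; tauto
    rw [Nat.even_iff] at hke
    have : Even k := Nat.even_iff.mpr hke
    tauto
  have hkmod : k % 2 = 1 := Nat.odd_iff.mp (Nat.not_even_iff_odd.mp hkodd)
  have hf0 : auxf k 0 = k := by simp [auxf]
  have hfk : auxf k k = 0 := by simp [auxf, hk0]
  have hfadj : ∀ i, i < n → G.Adj (x i) (x (auxf k i)) := by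
    intro i hi
    rcases auxf_cases k i with ⟨h1, h2⟩ | ⟨h1, h2⟩ | ⟨h1, h2, h3, h4, h5⟩ |
      ⟨h1, h2, h3, h4, h5⟩ | ⟨h1, h2, h3, h4, h5⟩ | ⟨h1, h2, h3, h4, h5⟩
    · subst h1; rw [h2, hx0, hkv]; exact he
    · subst h1; rw [h2, hkv, hx0]; exact he.symm
    · rw [h5]; exact hadjx i hi
    · rw [h5]
      have hi1 : i - 1 + 1 = i := by omega
      exact hi1 ▸ (hadjx (i-1) (by omega)).symm
    · rw [h5]; exact hadjx i hi
    · rw [h5]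
      have hi1 : i - 1 + 1 = i := by omega
      exact hi1 ▸ (hadjx (i-1) (by omega)).symm
  -- the partner function on vertices
  have hchoice : ∀ w : V, (hsurj w).choose < n ∧ x ((hsurj w).choose) = w :=
    fun w => (hsurj w).choose_spec
  set idx : V → ℕ := fun w => (hsurj w).choose with hidxdef
  have hidx_lt : ∀ w, idx w < n := fun w => (hchoice w).1
  have hx_idx : ∀ w, x (idx w) = w := fun w => (hchoice w).2
  have hidx_x : ∀ i, i < n → idx (x i) = i := by
    intro i hi
    exact hinj _ _ (hidx_lt _) hi (hx_idx _)
  set g : V → V := fun w => x (auxf k (idx w)) with hgdef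
  have hgx : ∀ i, i < n → g (x i) = x (auxf k i) := by
    intro i hi; simp only [hgdef, hidx_x i hi]
  have hgg : ∀ w, g (g w) = w := by
    intro w
    have h1 : g w = x (auxf k (idx w)) := rfl
    rw [h1, hgx _ (auxf_lt hkmod hnmod hkn (hidx_lt w)),
      auxf_invol hkmod hnmod hkn (hidx_lt w), hx_idx]
  have hgadj : ∀ w, G.Adj w (g w) := by
    intro w
    have h1 := hfadj (idx w) (hidx_lt w)
    rwa [hx_idx] at h1
  refine ⟨{ verts := Set.univ,
            Adj := fun a b => g a = b ∧ g b = a,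
            adj_sub := ?_,
            edge_vert := fun _ => trivial,
            symm := ⟨fun a b hab => ⟨hab.2, hab.1⟩⟩ }, ⟨?_, fun _ => trivial⟩, ?_⟩
  · rintro a b ⟨h1, h2⟩
    exact h1 ▸ hgadj a
  · intro w _
    exact ⟨g w, ⟨rfl, hgg w⟩, fun y hy => hy.1.symm⟩
  · rw [SimpleGraph.Subgraph.mem_edgeSet]
    constructor
    · rw [← hx0, hgx 0 (by omega), hf0, hkv]
    · rw [← hkv, hgx k hkn, hfk, hx0]
end

section
/- Let G be a finite connected bipartite simple graph with a perfect matching M, and let C be an M-alternating cycle in G with vertex set S. Then the induced subgraph G[S] is elementary: it is connected and every edge of G[S] belongs to some perfect matching of G[S]. -/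
open SimpleGraph

set_option linter.unusedSectionVars false


/-- Partner function for the matching on cycle indices `0, ..., n-1`
given a chord `{i, j}` with `i < j`. -/
def gfun (n i j k : ℕ) : ℕ :=
  if k = i then j
  else if k = j then i
  else if i < k ∧ k < j then (if (k - i) % 2 = 1 then k + 1 else k - 1)
  else if j < k then (if (k - j) % 2 = 1 then (if k + 1 = n then 0 else k + 1) else k - 1)
  else (if (k + n - j) % 2 = 1 then k + 1 else (if k = 0 then n - 1 else k - 1))

/-- Full case description of `gfun`. -/
def gspec (n i j k m : ℕ) : Prop :=
  (k = i ∧ m = j) ∨ (k = j ∧ m = i) ∨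
  (i < k ∧ k < j ∧ (k - i) % 2 = 1 ∧ m = k + 1) ∨
  (i < k ∧ k < j ∧ (k - i) % 2 = 0 ∧ m = k - 1) ∨
  (j < k ∧ k + 1 < n ∧ (k - j) % 2 = 1 ∧ m = k + 1) ∨
  (j < k ∧ k + 1 = n ∧ (k - j) % 2 = 1 ∧ m = 0) ∨
  (j < k ∧ (k - j) % 2 = 0 ∧ m = k - 1) ∨
  (k < i ∧ (k + n - j) % 2 = 1 ∧ m = k + 1) ∨
  (0 < k ∧ k < i ∧ (k + n - j) % 2 = 0 ∧ m = k - 1) ∨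
  (k = 0 ∧ 0 < i ∧ (k + n - j) % 2 = 0 ∧ m = n - 1)

section arith
variable {n i j : ℕ} (hij : i < j) (hjn : j < n) (hodd : (j - i) % 2 = 1) (hn : n % 2 = 0)

include hij hjn hodd hn

lemma gfun_spec : ∀ k < n, gspec n i j k (gfun n i j k) := by
  intro k hk
  unfold gfun gspec
  split_ifs with h1 h2 h3 h4 h5 h6 h7 h8 h9
  · exact Or.inl ⟨h1, rfl⟩
  · exact Or.inr <| Or.inl ⟨h2, rfl⟩
  · exact Or.inr <| Or.inr <| Or.inl ⟨h3.1, h3.2, h4, rfl⟩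
  · exact Or.inr <| Or.inr <| Or.inr <| Or.inl ⟨h3.1, h3.2, by omega, rfl⟩
  · exact Or.inr <| Or.inr <| Or.inr <| Or.inr <| Or.inr <| Or.inl ⟨h5, h7, h6, rfl⟩
  · exact Or.inr <| Or.inr <| Or.inr <| Or.inr <| Or.inl ⟨h5, by omega, h6, rfl⟩
  · exact Or.inr <| Or.inr <| Or.inr <| Or.inr <| Or.inr <| Or.inr <| Or.inl ⟨h5, by omega, rfl⟩
  · exact Or.inr <| Or.inr <| Or.inr <| Or.inr <| Or.inr <| Or.inr <| Or.inr <| Or.inl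
      ⟨by omega, h8, rfl⟩
  · exact Or.inr <| Or.inr <| Or.inr <| Or.inr <| Or.inr <| Or.inr <| Or.inr <| Or.inr <| Or.inr
      ⟨h9, by omega, by omega, rfl⟩
  · exact Or.inr <| Or.inr <| Or.inr <| Or.inr <| Or.inr <| Or.inr <| Or.inr <| Or.inr <| Or.inl
      ⟨by omega, by omega, by omega, rfl⟩

lemma gfun_lt : ∀ k < n, gfun n i j k < n := by
  intro k hk
  have := gfun_spec hij hjn hodd hn k hk
  unfold gspec at this; omega

lemma gfun_ne : ∀ k < n, gfun n i j k ≠ k := by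
  intro k hk
  have := gfun_spec hij hjn hodd hn k hk
  unfold gspec at this; omega

lemma gfun_invol : ∀ k < n, gfun n i j (gfun n i j k) = k := by
  intro k hk
  have h1 := gfun_spec hij hjn hodd hn k hk
  have h2 := gfun_spec hij hjn hodd hn _ (gfun_lt hij hjn hodd hn k hk)
  unfold gspec at h1 h2; omega

lemma gfun_consec : ∀ k < n, (k = i ∧ gfun n i j k = j) ∨ (k = j ∧ gfun n i j k = i) ∨
    (gfun n i j k = k + 1 ∧ k + 1 < n) ∨ (k = gfun n i j k + 1 ∧ k < n) ∨
    (k = n - 1 ∧ gfun n i j k = 0) ∨ (gfun n i j k = n - 1 ∧ k = 0) := by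
  intro k hk
  have := gfun_spec hij hjn hodd hn k hk
  unfold gspec at this
  rcases this with h|h|h|h|h|h|h|h|h|h
  · exact Or.inl ⟨h.1, h.2⟩
  · exact Or.inr <| Or.inl ⟨h.1, h.2⟩
  · exact Or.inr <| Or.inr <| Or.inl ⟨h.2.2.2, by omega⟩
  · exact Or.inr <| Or.inr <| Or.inr <| Or.inl ⟨by omega, hk⟩
  · exact Or.inr <| Or.inr <| Or.inl ⟨h.2.2.2, by omega⟩
  · exact Or.inr <| Or.inr <| Or.inr <| Or.inr <| Or.inl ⟨by omega, h.2.2.2⟩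
  · exact Or.inr <| Or.inr <| Or.inr <| Or.inl ⟨by omega, hk⟩
  · exact Or.inr <| Or.inr <| Or.inl ⟨h.2.2, by omega⟩
  · exact Or.inr <| Or.inr <| Or.inr <| Or.inl ⟨by omega, hk⟩
  · exact Or.inr <| Or.inr <| Or.inr <| Or.inr <| Or.inr ⟨h.2.2.2, h.1⟩

lemma gfun_i : gfun n i j i = j := by unfold gfun; split_ifs <;> omega
end arith

set_option linter.unusedSectionVars false

lemma getVert_eq_support_getElem {V : Type*} {G : SimpleGraph V} {u w : V} (p : G.Walk u w) :
    ∀ (i : ℕ) (h : i < p.support.length), p.getVert i = p.support[i] := by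
  induction p with
  | nil =>
    intro i h
    simp only [SimpleGraph.Walk.support_nil, List.length_singleton] at h
    interval_cases i
    simp [SimpleGraph.Walk.getVert_zero]
  | cons hadj q ih =>
    intro i h
    match i with
    | 0 => simp [SimpleGraph.Walk.getVert_zero]
    | (i + 1) =>
      simp only [SimpleGraph.Walk.getVert_cons_succ, SimpleGraph.Walk.support_cons,
        List.getElem_cons_succ]
      exact ih i (by simpa [SimpleGraph.Walk.support_cons] using h)

lemma cycle_getVert_inj {V : Type*} {G : SimpleGraph V} {v : V} {p : G.Walk v v}
    (hc : p.IsCycle) {a b : ℕ} (ha : a < p.length) (hb : b < p.length)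
    (h : p.getVert a = p.getVert b) : a = b := by
  have hnd := hc.support_nodup
  have hlen : p.support.length = p.length + 1 := p.length_support
  have htl : p.support.tail.length = p.length := by
    rw [List.length_tail, hlen]
    omega
  have key : ∀ c d : ℕ, 0 < c → c ≤ p.length → 0 < d → d ≤ p.length →
      p.getVert c = p.getVert d → c = d := by
    intro c d hc0 hcl hd0 hdl hcd
    have h1 : p.getVert c = p.support.tail[c - 1]'(by omega) := by
      rw [List.getElem_tail]
      rw [getVert_eq_support_getElem p c (by omega)]
      congr 1
      omega
    have h2 : p.getVert d = p.support.tail[d - 1]'(by omega) := by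
      rw [List.getElem_tail]
      rw [getVert_eq_support_getElem p d (by omega)]
      congr 1
      omega
    have := (hnd.getElem_inj_iff).mp (h1 ▸ h2 ▸ hcd)
    omega
  rcases Nat.eq_zero_or_pos a with ha0 | ha0 <;> rcases Nat.eq_zero_or_pos b with hb0 | hb0
  · omega
  · subst ha0
    have hv : p.getVert p.length = p.getVert b :=
      p.getVert_length.trans ((p.getVert_zero.symm).trans h)
    have := key p.length b (by omega) le_rfl hb0 (by omega) hv
    omega
  · subst hb0
    have hv : p.getVert a = p.getVert p.length :=
      h.trans (p.getVert_zero.trans p.getVert_length.symm)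
    have := key a p.length ha0 (by omega) (by omega) le_rfl hv
    omega
  · exact key a b ha0 (by omega) hb0 (by omega) h

lemma bip_step {V : Type*} {G : SimpleGraph V} {A B : Set V} (hbip : IsBipartition G A B)
    {x y : V} (h : G.Adj x y) : (y ∈ A ↔ ¬ x ∈ A) := by
  obtain ⟨hdisj, huniv, hadj⟩ := hbip
  rcases hadj h with ⟨hx, hy⟩ | ⟨hx, hy⟩
  · have : y ∉ A := fun hyA => Set.disjoint_left.mp hdisj hyA hy
    tauto
  · have : x ∉ A := fun hxA => Set.disjoint_left.mp hdisj hxA hx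
    tauto

lemma bip_getVert_parity {V : Type*} {G : SimpleGraph V} {A B : Set V}
    (hbip : IsBipartition G A B) {u w : V} (p : G.Walk u w) :
    ∀ k, k ≤ p.length → (p.getVert k ∈ A ↔ (u ∈ A ↔ k % 2 = 0)) := by
  intro k
  induction k with
  | zero => intro _; simp [p.getVert_zero]
  | succ k ih =>
    intro hk
    have h1 := ih (by omega)
    have h2 := bip_step hbip (p.adj_getVert_succ (i := k) (by omega))
    have h3 : ((k + 1) % 2 = 0 ↔ ¬ (k % 2 = 0)) := by omega
    rw [h2, h1, h3]
    tauto

lemma chord_parity {V : Type*} {G : SimpleGraph V} {A B : Set V}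
    (hbip : IsBipartition G A B) {v : V} (p : G.Walk v v) {i j : ℕ}
    (hi : i ≤ p.length) (hj : j ≤ p.length)
    (hadj : G.Adj (p.getVert i) (p.getVert j)) : ¬ (i % 2 = j % 2) := by
  have h1 := bip_getVert_parity hbip p i hi
  have h2 := bip_getVert_parity hbip p j hj
  have h3 := bip_step hbip hadj
  intro h
  have h4 : (i % 2 = 0 ↔ j % 2 = 0) := by omega
  rw [h1, h2] at h3
  tauto

lemma getVert_mem_support {V : Type*} {G : SimpleGraph V} {u w : V} (p : G.Walk u w) (k : ℕ) :
    p.getVert k ∈ p.support := by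
  rcases le_or_gt k p.length with h | h
  · exact SimpleGraph.Walk.mem_support_iff_exists_getVert.mpr ⟨k, rfl, h⟩
  · rw [p.getVert_of_length_le (by omega)]
    exact p.end_mem_support

lemma support_exists_getVert_lt {V : Type*} {G : SimpleGraph V} {v : V} {p : G.Walk v v}
    (hc : p.IsCycle) {u : V} (hu : u ∈ p.support) :
    ∃ a, a < p.length ∧ p.getVert a = u := by
  obtain ⟨c, hcu, hcle⟩ := SimpleGraph.Walk.mem_support_iff_exists_getVert.mp hu
  rcases lt_or_eq_of_le hcle with h | h
  · exact ⟨c, h, hcu⟩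
  · exact ⟨0, by have := hc.three_le_length; omega,
      p.getVert_zero.trans (p.getVert_length.symm.trans (h ▸ hcu))⟩

lemma chord_pm {V : Type*} {G : SimpleGraph V} {A B : Set V} (hbip : IsBipartition G A B)
    {v : V} {p : G.Walk v v} (hc : p.IsCycle) (heven : Even p.length)
    {i j : ℕ} (hij : i < j) (hjn : j < p.length)
    (hadj : G.Adj (p.getVert i) (p.getVert j)) :
    ∃ M' : (G.induce {u | u ∈ p.support}).Subgraph, M'.IsPerfectMatching ∧
      s((⟨p.getVert i, getVert_mem_support p i⟩ : {u | u ∈ p.support}),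
        (⟨p.getVert j, getVert_mem_support p j⟩ : {u | u ∈ p.support})) ∈ M'.edgeSet := by
  have h3 := hc.three_le_length
  have hn : p.length % 2 = 0 := Nat.even_iff.mp heven
  have hodd : (j - i) % 2 = 1 := by
    have := chord_parity hbip p (by omega) (by omega) hadj
    omega
  set n := p.length with hndef
  have hglt := gfun_lt hij hjn hodd hn
  have hginv := gfun_invol hij hjn hodd hn
  have hgcons := gfun_consec hij hjn hodd hn
  have pairAdj : ∀ a, a < n → G.Adj (p.getVert a) (p.getVert (gfun n i j a)) := by
    intro a ha
    rcases hgcons a ha with ⟨h1, h2⟩ | ⟨h1, h2⟩ | ⟨h1, h2⟩ | ⟨h1, h2⟩ | ⟨h1, h2⟩ | ⟨h1, h2⟩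
    · rw [h2, h1]; exact hadj
    · rw [h2, h1]; exact hadj.symm
    · rw [h1]; exact p.adj_getVert_succ (by omega)
    · have h4 := p.adj_getVert_succ (i := gfun n i j a) (by omega)
      rw [← h1] at h4
      exact h4.symm
    · rw [h2, h1, p.getVert_zero]
      have h4 := p.adj_getVert_succ (i := p.length - 1) (by omega)
      rw [show p.length - 1 + 1 = p.length by omega, p.getVert_length] at h4
      exact h4
    · rw [h1, h2, p.getVert_zero]
      have h4 := p.adj_getVert_succ (i := p.length - 1) (by omega)
      rw [show p.length - 1 + 1 = p.length by omega, p.getVert_length] at h4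
      exact h4.symm
  have hmem : ∀ a : ℕ, p.getVert a ∈ {u | u ∈ p.support} := fun a => getVert_mem_support p a
  refine ⟨{
    verts := Set.univ
    Adj := fun x y => ∃ a, a < n ∧
      ((p.getVert a = x.val ∧ p.getVert (gfun n i j a) = y.val) ∨
       (p.getVert a = y.val ∧ p.getVert (gfun n i j a) = x.val))
    adj_sub := by
      rintro x y ⟨a, ha, (⟨h1, h2⟩ | ⟨h1, h2⟩)⟩
      · have h4 := pairAdj a ha
        rw [h1, h2] at h4
        exact h4
      · have h4 := pairAdj a ha
        rw [h1, h2] at h4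
        exact h4.symm
    edge_vert := fun _ => Set.mem_univ _
    symm := by
      constructor
      rintro x y ⟨a, ha, hcase⟩
      exact ⟨a, ha, hcase.symm⟩ }, ⟨?_, fun x => Set.mem_univ x⟩, ?_⟩
  · rintro x -
    obtain ⟨a, han, ha⟩ := support_exists_getVert_lt hc x.2
    refine ⟨⟨p.getVert (gfun n i j a), hmem _⟩, ⟨a, han, Or.inl ⟨ha, rfl⟩⟩, ?_⟩
    rintro y ⟨b, hbn, (⟨h1, h2⟩ | ⟨h1, h2⟩)⟩
    · have hba : b = a := cycle_getVert_inj hc hbn han (h1.trans ha.symm)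
      subst hba
      exact Subtype.ext h2.symm
    · have hgb : gfun n i j b = a := cycle_getVert_inj hc (hglt b hbn) han (h2.trans ha.symm)
      have hb : b = gfun n i j a := by rw [← hgb, hginv b hbn]
      refine Subtype.ext ?_
      rw [← h1, hb]
  · exact SimpleGraph.Subgraph.mem_edgeSet.mpr
      ⟨i, by omega, Or.inl ⟨rfl, by rw [gfun_i hij hjn hodd hn]⟩⟩

/-- If `C` is an `M`-alternating cycle of a finite connected bipartite graph
`G` with perfect matching `M`, and `S` is the vertex set of `C`, then `G[S]`
is elementary: connected and every edge in some perfect matching of `G[S]`. -/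
theorem stmt5 {V : Type*} [Fintype V] (G : SimpleGraph V)
    (hbip : ∃ A B : Set V, IsBipartition G A B) (hconn : G.Connected)
    (M : G.Subgraph) (hM : M.IsPerfectMatching)
    (v : V) (p : G.Walk v v) (hp : IsAlternatingCycle G M p) :
    IsElementary (G.induce {u | u ∈ p.support}) := by
  obtain ⟨A, B, hbA⟩ := hbip
  obtain ⟨hc, heven, -⟩ := hp
  refine ⟨p.connected_induce_support, ?_⟩
  intro e he
  revert he
  induction e using Sym2.ind with
  | _ x y =>
    intro he
    have hxy : G.Adj x.val y.val := he
    obtain ⟨a, han, ha⟩ := support_exists_getVert_lt hc x.2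
    obtain ⟨b, hbn, hb⟩ := support_exists_getVert_lt hc y.2
    have hab : a ≠ b := by
      intro h
      apply hxy.ne
      rw [← ha, ← hb, h]
    have hx' : (⟨p.getVert a, getVert_mem_support p a⟩ : {u | u ∈ p.support}) = x :=
      Subtype.ext ha
    have hy' : (⟨p.getVert b, getVert_mem_support p b⟩ : {u | u ∈ p.support}) = y :=
      Subtype.ext hb
    rcases hab.lt_or_gt with hlt | hlt
    · obtain ⟨M', hpm, hedge⟩ := chord_pm hbA hc heven hlt hbn (by rw [ha, hb]; exact hxy)
      rw [hx', hy'] at hedge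
      exact ⟨M', hpm, hedge⟩
    · obtain ⟨M', hpm, hedge⟩ := chord_pm hbA hc heven hlt han (by rw [hb, ha]; exact hxy.symm)
      rw [hy', hx'] at hedge
      exact ⟨M', hpm, by rw [Sym2.eq_swap]; exact hedge⟩
end

section
/- Let G be a finite connected bipartite simple graph with a perfect matching M such that no special subset of V(G) with respect to M induces an elementary subgraph of G. Then G has a vertex of degree 1. -/
open SimpleGraph

section aux
variable {V : Type*} {G : SimpleGraph V} {M : G.Subgraph} {A B : Set V}

/-- An alternating cycle encoded as a periodic sequence. -/
def AltCyc (G : SimpleGraph V) (M : G.Subgraph) (L : ℕ) (c : ℕ → V) : Prop :=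
  4 ≤ L ∧ Even L ∧ (∀ k, c (k + L) = c k) ∧
  (∀ a b, a < L → b < L → c a = c b → a = b) ∧
  (∀ k, G.Adj (c k) (c (k+1))) ∧
  (∀ k, M.Adj (c k) (c (k+1)) ↔ Even k)

lemma parity_of_seq (hbip : IsBipartition G A B) {w : ℕ → V}
    (hadj : ∀ k, G.Adj (w k) (w (k+1))) {a b : ℕ} (hab : w a = w b) :
    (Even a ↔ Even b) := by
  have hdisj : ∀ x, x ∈ A → x ∉ B := fun x hA hB => (Set.disjoint_left.mp hbip.1) hA hB
  have hflip : ∀ k, (w (k+1) ∈ A ↔ ¬ (w k ∈ A)) := by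
    intro k
    rcases hbip.2.2 (hadj k) with ⟨hu, hx⟩ | ⟨hu, hx⟩
    · exact ⟨fun hxA _ => hdisj _ hxA hx, fun h => absurd hu h⟩
    · exact ⟨fun _ huA => hdisj _ huA hu, fun _ => hx⟩
  have key : ∀ k, (w k ∈ A ↔ (Even k ↔ w 0 ∈ A)) := by
    intro k
    induction k with
    | zero => simp
    | succ n ih =>
      rw [hflip n, ih, Nat.even_add_one]
      tauto
  have h1 := key a
  have h2 := key b
  rw [hab] at h1
  by_cases h0 : w 0 ∈ A <;> by_cases hb : w b ∈ A <;> tauto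

end aux

section aux2
variable {V : Type*} {G : SimpleGraph V} {M : G.Subgraph} {A B : Set V}

lemma periodic_mod {L : ℕ} (hL : 0 < L) {c : ℕ → V} (hper : ∀ k, c (k + L) = c k) :
    ∀ k, c (k % L) = c k := by
  intro k
  induction k using Nat.strong_induction_on with
  | _ k ih =>
    rcases lt_or_ge k L with h | h
    · rw [Nat.mod_eq_of_lt h]
    · have h1 : k = (k - L) + L := by omega
      have h2 : (k - L) % L = k % L := by
        conv_rhs => rw [h1]
        rw [Nat.add_mod_right]
      rw [← h2, ih (k - L) (by omega), ← hper (k - L), ← h1]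

lemma even_mod_even {L k : ℕ} (hL : Even L) : Even (k % L) ↔ Even k := by
  conv_rhs => rw [← Nat.div_add_mod k L]
  rw [Nat.even_add]
  have : Even (L * (k / L)) := hL.mul_right _
  tauto

lemma mod_succ_lt {k L : ℕ} (h4 : 4 ≤ L) (h : k % L < L - 1) : (k+1) % L = k % L + 1 := by
  rw [Nat.add_mod, Nat.mod_eq_of_lt (show 1 < L by omega), Nat.mod_eq_of_lt (by omega)]

lemma mod_succ_wrap {k L : ℕ} (h4 : 4 ≤ L) (h : k % L = L - 1) : (k+1) % L = 0 := by
  rw [Nat.add_mod, Nat.mod_eq_of_lt (show 1 < L by omega), h, show L - 1 + 1 = L by omega,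
    Nat.mod_self]

lemma altCyc_shrink {L : ℕ} {c : ℕ → V} (hc : AltCyc G M L c)
    {s L' : ℕ} (hs : Even s) (hL4 : 4 ≤ L') (hLe : Even L') (hlt : L' ≤ L)
    (hadj : G.Adj (c (s + (L' - 1))) (c s)) (hnadj : ¬ M.Adj (c (s + (L' - 1))) (c s)) :
    AltCyc G M L' (fun k => c (s + k % L')) := by
  obtain ⟨hL4', hLe', hper, hinj, hG, hMt⟩ := hc
  have hLpos : 0 < L := by omega
  have hmod := periodic_mod hLpos hper
  have hinj' : ∀ a b, c a = c b → a % L = b % L := by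
    intro a b hab
    refine hinj _ _ (Nat.mod_lt _ hLpos) (Nat.mod_lt _ hLpos) ?_
    rw [hmod, hmod, hab]
  have key : ∀ k : ℕ, G.Adj (c (s + k % L')) (c (s + (k+1) % L')) ∧
      (M.Adj (c (s + k % L')) (c (s + (k+1) % L')) ↔ Even k) := by
    intro k
    have hrL : k % L' < L' := Nat.mod_lt _ (by omega)
    have hre : Even (k % L') ↔ Even k := even_mod_even hLe
    rcases lt_or_eq_of_le (show k % L' ≤ L' - 1 by omega) with h | h
    · rw [mod_succ_lt hL4 h, ← Nat.add_assoc]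
      refine ⟨hG _, ?_⟩
      rw [hMt, Nat.even_add, ← hre]
      have := hs
      tauto
    · rw [mod_succ_wrap hL4 h, h, Nat.add_zero]
      refine ⟨hadj, ?_⟩
      have hodd : ¬ Even k := by
        rw [← hre, h]
        obtain ⟨t, ht⟩ := hLe
        simp [ht, Nat.even_sub (by omega : 1 ≤ t + t)]
      tauto
  refine ⟨hL4, hLe, fun k => by simp [Nat.add_mod_right], ?_, fun k => (key k).1,
    fun k => (key k).2⟩
  intro a b ha hb hab
  simp only [Nat.mod_eq_of_lt ha, Nat.mod_eq_of_lt hb] at hab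
  have h2 : a % L = b % L := Nat.ModEq.add_left_cancel' s (hinj' _ _ hab)
  rwa [Nat.mod_eq_of_lt (by omega), Nat.mod_eq_of_lt (by omega)] at h2

end aux2

section aux3
variable {V : Type*} {G : SimpleGraph V} {M : G.Subgraph} {A B : Set V}

lemma exists_altCyc [Fintype V] [DecidableRel G.Adj] (hbip : IsBipartition G A B)
    (hM : M.IsPerfectMatching) (hdeg : ∀ v : V, 2 ≤ G.degree v) (v0 : V) :
    ∃ L c, AltCyc G M L c := by
  classical
  -- the matching partner function
  have hMex : ∀ v : V, ∃ w, M.Adj v w := fun v => ((hM.1 (hM.2 v)).exists)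
  choose m hm using hMex
  have hmu : ∀ v w, M.Adj v w → w = m v := by
    intro v w hw
    exact ((hM.1 (hM.2 v)).unique hw (hm v))
  -- a non-partner neighbour
  have hnex : ∀ v : V, ∃ w, G.Adj v w ∧ w ≠ m v := by
    intro v
    have hcard : 1 < (G.neighborFinset v).card := by
      rw [card_neighborFinset_eq_degree]; exact hdeg v
    obtain ⟨w, hw, hwne⟩ := Finset.exists_mem_ne hcard (m v)
    exact ⟨w, (mem_neighborFinset _ _ _).mp hw, hwne⟩
  choose n hn1 hn2 using hnex
  -- the alternating walk
  set v : ℕ → V := fun k => Nat.rec v0 (fun k ih => if Even k then m ih else n ih) k with hv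
  have hstep : ∀ k, v (k+1) = if Even k then m (v k) else n (v k) := fun k => rfl
  have hGadj : ∀ k, G.Adj (v k) (v (k+1)) := by
    intro k
    rw [hstep]
    split
    · exact M.adj_sub (hm _)
    · exact hn1 _
  have hMadj : ∀ k, M.Adj (v k) (v (k+1)) ↔ Even k := by
    intro k
    rw [hstep]
    split
    case isTrue h => simpa [h] using hm (v k)
    case isFalse h =>
      simp only [h, iff_false]
      intro hMa
      exact hn2 _ (hmu _ _ hMa)
  -- a repetition exists
  have hrep : ∃ j, ∃ i, i < j ∧ v i = v j := by
    have hninj : ¬ Function.Injective (fun i : Fin (Fintype.card V + 1) => v i) := by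
      intro hinj
      have := Fintype.card_le_of_injective _ hinj
      simp at this
    rw [Function.not_injective_iff] at hninj
    obtain ⟨a, b, hab, hne⟩ := hninj
    rcases lt_trichotomy (a : ℕ) (b : ℕ) with h | h | h
    · exact ⟨b, a, h, hab⟩
    · exact absurd (Fin.ext h) hne
    · exact ⟨a, b, h, hab.symm⟩
  set j := Nat.find hrep with hj
  obtain ⟨i, hij, hvij⟩ : ∃ i, i < j ∧ v i = v j := Nat.find_spec hrep
  have hmin : ∀ j' , j' < j → ¬∃ i, i < j' ∧ v i = v j' := fun j' h => Nat.find_min hrep h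
  have hdist : ∀ a b, a < b → b < j → v a ≠ v b := by
    intro a b hab hbj hne
    exact hmin b hbj ⟨a, hab, hne⟩
  have hminv : ∀ x, m (m x) = x := fun x => (hmu (m x) x (M.adj_symm (hm x))).symm
  have hpar : Even i ↔ Even j := parity_of_seq hbip hGadj hvij
  -- the first repetition starts at an even index
  have hieven : Even i := by
    by_contra hodd
    have hjodd : ¬ Even j := fun h => hodd (hpar.mpr h)
    have hi2 : i % 2 = 1 := Nat.odd_iff.mp (Nat.not_even_iff_odd.mp hodd)
    have hj2 : j % 2 = 1 := Nat.odd_iff.mp (Nat.not_even_iff_odd.mp hjodd)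
    have h1 : Even (i - 1) := Nat.even_iff.mpr (by omega)
    have h1' : Even (j - 1) := Nat.even_iff.mpr (by omega)
    have hvi : v i = m (v (i-1)) := by
      have h := hstep (i-1)
      rw [if_pos h1, show i - 1 + 1 = i by omega] at h
      exact h
    have hvj : v j = m (v (j-1)) := by
      have h := hstep (j-1)
      rw [if_pos h1', show j - 1 + 1 = j by omega] at h
      exact h
    have heq : v (i-1) = v (j-1) := by
      have h := hvij
      rw [hvi, hvj] at h
      have := congrArg m h
      rwa [hminv, hminv] at this
    exact hdist (i-1) (j-1) (by omega) (by omega) heq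
  have hjeven : Even j := hpar.mp hieven
  have hi2 : i % 2 = 0 := Nat.even_iff.mp hieven
  have hj2 : j % 2 = 0 := Nat.even_iff.mp hjeven
  set L := j - i with hLdef
  have hL2 : L ≠ 2 := by
    intro h
    have hji : j = i + 2 := by omega
    have h1 : v (i+2) = n (v (i+1)) := by
      have h := hstep (i+1)
      rw [if_neg (by simpa [Nat.even_add_one] using hieven)] at h
      exact h
    have h2 : M.Adj (v i) (v (i+1)) := (hMadj i).mpr hieven
    have h3 : v i = m (v (i+1)) := hmu _ _ (M.adj_symm h2)
    refine hn2 (v (i+1)) ?_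
    rw [← h1, ← h3, show i + 2 = j from hji.symm, ← hvij]
  have hL4 : 4 ≤ L := by
    have : L % 2 = 0 := by omega
    have hL0 : 1 ≤ L := by omega
    omega
  have hjiL : j = i + L := by omega
  refine ⟨L, fun k => v (i + k % L), ?_, Nat.even_iff.mpr (by omega), fun k => by
      simp [Nat.add_mod_right], ?_, ?_, ?_⟩
  · exact hL4
  · intro a b ha hb hab
    simp only [Nat.mod_eq_of_lt ha, Nat.mod_eq_of_lt hb] at hab
    by_contra hne
    rcases lt_trichotomy a b with h | h | h
    · exact hdist (i+a) (i+b) (by omega) (by omega) hab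
    · exact hne h
    · exact hdist (i+b) (i+a) (by omega) (by omega) hab.symm
  · intro k
    simp only
    have hck : v (i + (k+1) % L) = v (i + k % L + 1) := by
      rcases lt_or_eq_of_le (show k % L ≤ L - 1 from by
          have := Nat.mod_lt k (show 0 < L by omega); omega) with h | h
      · rw [mod_succ_lt hL4 h, ← Nat.add_assoc]
      · rw [mod_succ_wrap hL4 h, h, Nat.add_zero, show i + (L-1) + 1 = i + L by omega,
          ← hjiL, ← hvij]
    rw [hck]
    exact hGadj _
  · intro k
    simp only
    have hck : v (i + (k+1) % L) = v (i + k % L + 1) := by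
      rcases lt_or_eq_of_le (show k % L ≤ L - 1 from by
          have := Nat.mod_lt k (show 0 < L by omega); omega) with h | h
      · rw [mod_succ_lt hL4 h, ← Nat.add_assoc]
      · rw [mod_succ_wrap hL4 h, h, Nat.add_zero, show i + (L-1) + 1 = i + L by omega,
          ← hjiL, ← hvij]
    rw [hck, hMadj]
    rw [Nat.even_add, ← even_mod_even (k := k) (Nat.even_iff.mpr (by omega : L % 2 = 0))]
    tauto

end aux3


section aux4
variable {V : Type*} {G : SimpleGraph V} {M : G.Subgraph} {A B : Set V}

lemma side_of_seq (hbip : IsBipartition G A B) {w : ℕ → V}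
    (hadj : ∀ k, G.Adj (w k) (w (k+1))) :
    ∀ k, (w k ∈ A ↔ (Even k ↔ w 0 ∈ A)) := by
  have hdisj : ∀ x, x ∈ A → x ∉ B := fun x hA hB => (Set.disjoint_left.mp hbip.1) hA hB
  have hflip : ∀ k, (w (k+1) ∈ A ↔ ¬ (w k ∈ A)) := by
    intro k
    rcases hbip.2.2 (hadj k) with ⟨hu, hx⟩ | ⟨hu, hx⟩
    · exact ⟨fun hxA _ => hdisj _ hxA hx, fun h => absurd hu h⟩
    · exact ⟨fun _ huA => hdisj _ huA hu, fun _ => hx⟩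
  intro k
  induction k with
  | zero => simp
  | succ n ih =>
    rw [hflip n, ih, Nat.even_add_one]
    tauto

lemma adj_parity_of_seq (hbip : IsBipartition G A B) {w : ℕ → V}
    (hadj : ∀ k, G.Adj (w k) (w (k+1))) {a b : ℕ} (h : G.Adj (w a) (w b)) :
    ¬ (Even a ↔ Even b) := by
  have hdisj : ∀ x, x ∈ A → x ∉ B := fun x hA hB => (Set.disjoint_left.mp hbip.1) hA hB
  have hopp : ¬ (w a ∈ A ↔ w b ∈ A) := by
    rcases hbip.2.2 h with ⟨hu, hx⟩ | ⟨hu, hx⟩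
    · exact fun hiff => hdisj _ (hiff.mp hu) hx
    · exact fun hiff => hdisj _ (hiff.mpr hx) hu
  have h1 := side_of_seq hbip hadj a
  have h2 := side_of_seq hbip hadj b
  tauto

end aux4

section aux5
variable {V : Type*} {G : SimpleGraph V} {M : G.Subgraph} {A B : Set V}

lemma exists_special_elementary [Fintype V] [DecidableRel G.Adj]
    (hbip : IsBipartition G A B) (hM : M.IsPerfectMatching)
    (hdeg : ∀ v : V, 2 ≤ G.degree v) (v0 : V) :
    ∃ S : Set V, IsSpecialSubset G M S ∧ IsElementary (G.induce S) := by
  classical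
  obtain ⟨L0, c0, hc0⟩ := exists_altCyc hbip hM hdeg v0
  have hP : ∃ L, ∃ c, AltCyc G M L c := ⟨L0, c0, hc0⟩
  set L := Nat.find hP with hLdef
  obtain ⟨c, hc⟩ : ∃ c, AltCyc G M L c := Nat.find_spec hP
  have hminL : ∀ L', L' < L → ¬ ∃ c, AltCyc G M L' c := fun L' h => Nat.find_min hP h
  obtain ⟨hL4, hLe, hper, hinj, hG, hMt⟩ := hc
  have hL2 : L % 2 = 0 := Nat.even_iff.mp hLe
  have hmod := periodic_mod (show 0 < L by omega) hper
  have hmu₂ : ∀ x y z : V, M.Adj x y → M.Adj x z → y = z :=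
    fun x y z h1 h2 => ((hM.1 (hM.2 x)).unique h1 h2)
  -- the minimal alternating cycle has no chords
  have hchord : ∀ a b, a < L → b < L → G.Adj (c a) (c b) →
      (b = a + 1 ∨ a = b + 1 ∨ (a = 0 ∧ b = L - 1) ∨ (b = 0 ∧ a = L - 1)) := by
    have key : ∀ a b, a < b → b < L → G.Adj (c a) (c b) → b ≠ a + 1 →
        ¬(a = 0 ∧ b = L-1) → False := by
      intro a b hab hbL hadj hne1 hne2
      have hpar : ¬ (Even a ↔ Even b) := adj_parity_of_seq hbip hG hadj
      have hpar2 : a % 2 ≠ b % 2 := by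
        intro h
        exact hpar (by rw [Nat.even_iff, Nat.even_iff, h])
      rcases Nat.even_or_odd a with ha | ha
      · -- a even, use the arc from a to b plus the chord
        have ha2 : a % 2 = 0 := Nat.even_iff.mp ha
        have hb2 : b % 2 = 1 := by omega
        have hMba : ¬ M.Adj (c b) (c a) := by
          intro hMba
          have h1 : M.Adj (c (b-1)) (c b) := by
            have := (hMt (b-1)).mpr (Nat.even_iff.mpr (by omega))
            rwa [show b - 1 + 1 = b by omega] at this
          have := hmu₂ (c b) (c a) (c (b-1)) hMba (M.adj_symm h1)
          have := hinj _ _ (by omega) (by omega) this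
          omega
        refine hminL (b - a + 1) (by omega) ⟨_, altCyc_shrink ⟨hL4, hLe, hper, hinj, hG, hMt⟩
          ha (by omega) (Nat.even_iff.mpr (by omega)) (by omega) ?_ ?_⟩
        · rw [show a + (b - a + 1 - 1) = b by omega]
          exact hadj.symm
        · rw [show a + (b - a + 1 - 1) = b by omega]
          exact hMba
      · -- a odd, use the complementary arc plus the chord
        have ha2 : a % 2 = 1 := Nat.odd_iff.mp ha
        have hb2 : b % 2 = 0 := by omega
        have hMab : ¬ M.Adj (c a) (c b) := by
          intro hMab
          have h1 : M.Adj (c (a-1)) (c a) := by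
            have := (hMt (a-1)).mpr (Nat.even_iff.mpr (by omega))
            rwa [show a - 1 + 1 = a by omega] at this
          have := hmu₂ (c a) (c b) (c (a-1)) hMab (M.adj_symm h1)
          have := hinj _ _ (by omega) (by omega) this
          omega
        have hbaL : b - a ≠ L - 1 := by
          intro h
          omega
        refine hminL (L - (b - a) + 1) (by omega) ⟨_, altCyc_shrink
          ⟨hL4, hLe, hper, hinj, hG, hMt⟩ (Nat.even_iff.mpr hb2) (by omega)
          (Nat.even_iff.mpr (by omega)) (by omega) ?_ ?_⟩
        · rw [show b + (L - (b - a) + 1 - 1) = a + L by omega, hper]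
          exact hadj
        · rw [show b + (L - (b - a) + 1 - 1) = a + L by omega, hper]
          exact hMab
    intro a b ha hb hadj
    by_contra hcon
    push_neg at hcon
    obtain ⟨h1, h2, h3, h4⟩ := hcon
    rcases lt_trichotomy a b with h | h | h
    · exact key a b h hb hadj h1 (by tauto)
    · exact (G.loopless.irrefl _ (h ▸ hadj)).elim
    · exact key b a h ha hadj.symm h2 (by tauto)
  -- now take the vertex set of the cycle
  set S : Set V := ↑((Finset.range L).image c) with hSdef
  have hmem : ∀ x, x ∈ S ↔ ∃ k, k < L ∧ c k = x := by
    intro x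
    simp [hSdef, Finset.mem_image, Finset.mem_range, eq_comm]
  have hcS : ∀ k, k < L → c k ∈ S := fun k hk => (hmem _).mpr ⟨k, hk, rfl⟩
  -- S is closed under matching partners
  have hS2 : ∀ ⦃x w : V⦄, x ∈ S → M.Adj x w → w ∈ S := by
    intro x w hx hxw
    obtain ⟨k, hk, rfl⟩ := (hmem x).mp hx
    rcases Nat.even_or_odd k with hke | hko
    · have h1 : M.Adj (c k) (c (k+1)) := (hMt k).mpr hke
      have := hmu₂ _ _ _ hxw h1
      subst this
      exact hcS _ (by have := Nat.even_iff.mp hke; omega)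
    · have hk1 : 1 ≤ k := by
        have := Nat.odd_iff.mp hko; omega
      have h1 : M.Adj (c (k-1)) (c k) := by
        have := (hMt (k-1)).mpr (Nat.even_iff.mpr (by have := Nat.odd_iff.mp hko; omega))
        rwa [show k - 1 + 1 = k by omega] at this
      have := hmu₂ _ _ _ hxw (M.adj_symm h1)
      subst this
      exact hcS _ (by omega)
  -- S is special
  have hspec : IsSpecialSubset G M S := by
    refine ⟨?_, hS2⟩
    rw [hSdef, Set.ncard_coe_finset, Finset.card_image_of_injOn, Finset.card_range]
    · exact hL4
    · intro a ha b hb hab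
      exact hinj a b (Finset.mem_range.mp ha) (Finset.mem_range.mp hb) hab
  -- connectivity of the induced graph
  have hiadj : ∀ (x y : S), G.Adj x.1 y.1 → (G.induce S).Adj x y := fun x y h => h
  have hconn : (G.induce S).Connected := by
    have hreach : ∀ k (hk : k < L),
        (G.induce S).Reachable ⟨c 0, hcS 0 (by omega)⟩ ⟨c k, hcS k hk⟩ := by
      intro k
      induction k with
      | zero => intro _; exact Reachable.refl _
      | succ n ih =>
        intro hk
        refine (ih (by omega)).trans (Adj.reachable ?_)
        exact hiadj ⟨c n, hcS n (by omega)⟩ ⟨c (n+1), hcS _ hk⟩ (hG n)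
    have hall : ∀ x : S, (G.induce S).Reachable ⟨c 0, hcS 0 (by omega)⟩ x := by
      rintro ⟨vx, hx⟩
      obtain ⟨k, hk, rfl⟩ := (hmem vx).mp hx
      exact hreach k hk
    haveI : Nonempty S := ⟨⟨c 0, hcS 0 (by omega)⟩⟩
    exact ⟨fun x y => (hall x).symm.trans (hall y)⟩
  -- the two perfect matchings of the induced graph
  have hM1 : ∀ x : S, ∃! w : S, M.Adj x.1 w.1 := by
    intro x
    obtain ⟨w, hw⟩ := (hM.1 (hM.2 x.1)).exists
    refine ⟨⟨w, hS2 x.2 hw⟩, hw, ?_⟩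
    intro y hy
    exact Subtype.ext (hmu₂ _ _ _ hy hw)
  have hM2 : ∀ x : S, ∃! w : S, G.Adj x.1 w.1 ∧ ¬ M.Adj x.1 w.1 := by
    rintro ⟨vx, hx⟩
    obtain ⟨k, hk, rfl⟩ := (hmem vx).mp hx
    simp only
    have huniq : ∀ (w : S), G.Adj (c k) w.1 → ¬ M.Adj (c k) w.1 →
        (∃ a, a < L ∧ c a = w.1 ∧ (a = k + 1 ∨ k = a + 1 ∨ (k = 0 ∧ a = L - 1) ∨
          (a = 0 ∧ k = L - 1))) := by
      rintro ⟨wv, hw⟩ hadj hnadj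
      obtain ⟨a, ha, rfl⟩ := (hmem wv).mp hw
      exact ⟨a, ha, rfl, hchord k a hk ha hadj⟩
    rcases Nat.even_or_odd k with hke | hko
    · have hk2 : k % 2 = 0 := Nat.even_iff.mp hke
      have hnota : ∀ (w : S), G.Adj (c k) w.1 → ¬ M.Adj (c k) w.1 →
          w.1 = (if k = 0 then c (L-1) else c (k-1)) := by
        intro w hadj hnadj
        obtain ⟨a, ha, hca, hcase⟩ := huniq w hadj hnadj
        rcases hcase with h | h | h | h
        · exfalso
          apply hnadj
          rw [← hca, h]
          exact (hMt k).mpr hke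
        · rw [← hca, if_neg (by omega), show k - 1 = a by omega]
        · rw [← hca, if_pos h.1, h.2]
        · omega
      by_cases hk0 : k = 0
      · subst hk0
        refine ⟨⟨c (L-1), hcS _ (by omega)⟩, ⟨?_, ?_⟩, ?_⟩
        · have := hG (L-1)
          rw [show L - 1 + 1 = 0 + L by omega, hper] at this
          exact this.symm
        · intro hMa
          have h1 := (hMt (L-1)).mp
          rw [show L - 1 + 1 = 0 + L by omega, hper] at h1
          have := h1 (M.adj_symm hMa)
          rw [Nat.even_iff] at this
          omega
        · intro y hy
          exact Subtype.ext ((hnota y hy.1 hy.2).trans (by rw [if_pos rfl]))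
      · have hk2' : 2 ≤ k := by omega
        refine ⟨⟨c (k-1), hcS _ (by omega)⟩, ⟨?_, ?_⟩, ?_⟩
        · have := hG (k-1)
          rw [show k - 1 + 1 = k by omega] at this
          exact this.symm
        · intro hMa
          have h1 := (hMt (k-1)).mp
          rw [show k - 1 + 1 = k by omega] at h1
          have := h1 (M.adj_symm hMa)
          rw [Nat.even_iff] at this
          omega
        · intro y hy
          exact Subtype.ext ((hnota y hy.1 hy.2).trans (by rw [if_neg hk0]))
    · have hk2 : k % 2 = 1 := Nat.odd_iff.mp hko
      have hnota : ∀ (w : S), G.Adj (c k) w.1 → ¬ M.Adj (c k) w.1 →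
          w.1 = (if k = L - 1 then c 0 else c (k+1)) := by
        intro w hadj hnadj
        obtain ⟨a, ha, hca, hcase⟩ := huniq w hadj hnadj
        rcases hcase with h | h | h | h
        · rw [← hca, if_neg (by omega), h]
        · exfalso
          apply hnadj
          refine M.adj_symm ?_
          rw [← hca, show k = a + 1 from h]
          exact (hMt a).mpr (Nat.even_iff.mpr (by omega))
        · omega
        · rw [← hca, if_pos h.2, h.1]
      by_cases hkL : k = L - 1
      · subst hkL
        refine ⟨⟨c 0, hcS _ (by omega)⟩, ⟨?_, ?_⟩, ?_⟩
        · have := hG (L-1)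
          rwa [show L - 1 + 1 = 0 + L by omega, hper] at this
        · intro hMa
          have h1 := (hMt (L-1)).mp
          rw [show L - 1 + 1 = 0 + L by omega, hper] at h1
          have := h1 hMa
          rw [Nat.even_iff] at this
          omega
        · intro y hy
          exact Subtype.ext ((hnota y hy.1 hy.2).trans (by rw [if_pos rfl]))
      · refine ⟨⟨c (k+1), hcS _ (by omega)⟩, ⟨hG k, ?_⟩, ?_⟩
        · intro hMa
          have := (hMt k).mp hMa
          rw [Nat.even_iff] at this
          omega
        · intro y hy
          exact Subtype.ext ((hnota y hy.1 hy.2).trans (by rw [if_neg hkL]))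
  -- assemble the two perfect matchings as subgraphs
  let M₁ : (G.induce S).Subgraph :=
    { verts := Set.univ
      Adj := fun x y => M.Adj x.1 y.1
      adj_sub := fun {x y} h => hiadj x y (M.adj_sub h)
      edge_vert := fun _ => Set.mem_univ _
      symm := ⟨fun x y h => M.adj_symm h⟩ }
  have hM₁pm : M₁.IsPerfectMatching := by
    rw [SimpleGraph.Subgraph.isPerfectMatching_iff]
    exact hM1
  let M₂ : (G.induce S).Subgraph :=
    { verts := Set.univ
      Adj := fun x y => G.Adj x.1 y.1 ∧ ¬ M.Adj x.1 y.1
      adj_sub := fun {x y} h => hiadj x y h.1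
      edge_vert := fun _ => Set.mem_univ _
      symm := ⟨fun x y h => ⟨h.1.symm, fun h' => h.2 (M.adj_symm h')⟩⟩ }
  have hM₂pm : M₂.IsPerfectMatching := by
    rw [SimpleGraph.Subgraph.isPerfectMatching_iff]
    exact hM2
  refine ⟨S, hspec, hconn, ?_⟩
  intro e he
  revert he
  refine Sym2.ind (fun x y he => ?_) e
  rw [SimpleGraph.mem_edgeSet] at he
  have hGxy : G.Adj x.1 y.1 := he
  by_cases hMxy : M.Adj x.1 y.1
  · exact ⟨M₁, hM₁pm, by rwa [SimpleGraph.Subgraph.mem_edgeSet]⟩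
  · exact ⟨M₂, hM₂pm, by rw [SimpleGraph.Subgraph.mem_edgeSet]; exact ⟨hGxy, hMxy⟩⟩

end aux5
/-- If no special subset of `V(G)` with respect to the perfect matching `M`
induces an elementary subgraph, then `G` has a vertex of degree 1. -/
theorem stmt7 {V : Type*} [Fintype V] (G : SimpleGraph V) [DecidableRel G.Adj]
    (hbip : ∃ A B : Set V, IsBipartition G A B) (hconn : G.Connected)
    (M : G.Subgraph) (hM : M.IsPerfectMatching)
    (hmax : ∀ S : Set V, IsSpecialSubset G M S → ¬ IsElementary (G.induce S)) :
    ∃ v : V, G.degree v = 1 := by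
  by_contra hcon
  push_neg at hcon
  haveI : Nonempty V := hconn.nonempty
  have hdeg : ∀ v : V, 2 ≤ G.degree v := by
    intro v
    obtain ⟨w, hw⟩ := (hM.1 (hM.2 v)).exists
    have h1 : 0 < G.degree v := G.degree_pos_iff_exists_adj v |>.mpr ⟨w, M.adj_sub hw⟩
    have h2 := hcon v
    omega
  obtain ⟨A, B, hAB⟩ := hbip
  obtain ⟨S, hS1, hS2⟩ :=
    exists_special_elementary hAB hM hdeg (Classical.arbitrary V)
  exact hmax S hS1 hS2
end

section
/- Let G be a finite connected bipartite simple graph with bipartition (A,B) and a perfect matching M, and let S be a special subset of V(G) with respect to M such that the induced subgraph G[S] is elementary. Then every minimum vertex cover X of G satisfies X ∩ S = A ∩ S or X ∩ S = B ∩ S. -/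
open SimpleGraph

lemma pm_exists_partner {V : Type*} {G : SimpleGraph V} {M : G.Subgraph}
    (hM : M.IsPerfectMatching) :
    ∃ f : V → V, (∀ v, M.Adj v (f v)) ∧ ∀ ⦃v w⦄, M.Adj v w → w = f v := by
  rw [SimpleGraph.Subgraph.isPerfectMatching_iff] at hM
  exact ⟨fun v => (hM v).choose, fun v => (hM v).choose_spec.1,
    fun v w h => (hM v).choose_spec.2 w h⟩

lemma cover_partner_iff {V : Type*} [Fintype V] {G : SimpleGraph V} {A B : Set V}
    (hbip : IsBipartition G A B) {M : G.Subgraph} (hM : M.IsPerfectMatching)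
    {X : Set V} (hX : _root_.IsVertexCover G X) (hcard : X.ncard ≤ A.ncard)
    {v w : V} (hvw : M.Adj v w) : v ∈ X ↔ w ∉ X := by
  classical
  obtain ⟨f, hf, huniq⟩ := pm_exists_partner hM
  obtain ⟨hdisj, hunion, hadj⟩ := hbip
  have hAB : ∀ a ∈ A, f a ∈ B := by
    intro a ha
    rcases hadj (M.adj_sub (hf a)) with ⟨_, h⟩ | ⟨h, _⟩
    · exact h
    · exact absurd h (Set.disjoint_left.mp hdisj ha)
  -- M.edgeSet is the image of A
  have himg : M.edgeSet = (fun a => s(a, f a)) '' A := by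
    ext e
    induction e using Sym2.ind with
    | _ u u' =>
      constructor
      · intro he
        rw [SimpleGraph.Subgraph.mem_edgeSet] at he
        rcases hadj (M.adj_sub he) with ⟨hu, _⟩ | ⟨_, hu'⟩
        · exact ⟨u, hu, by dsimp only; rw [← huniq he]⟩
        · exact ⟨u', hu', by dsimp only; rw [← huniq he.symm, Sym2.eq_swap]⟩
      · rintro ⟨a, ha, hae⟩
        have : M.Adj a (f a) := hf a
        rw [← hae]
        exact this
  have hcardA : M.edgeSet.ncard = A.ncard := by
    rw [himg]
    apply Set.ncard_image_of_injOn
    intro a ha b hb hab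
    rcases Sym2.eq_iff.mp hab with ⟨h1, _⟩ | ⟨h1, _⟩
    · exact h1
    · exact absurd (h1 ▸ hAB b hb) (Set.disjoint_left.mp hdisj ha)
  -- uniqueness of the M-edge through a vertex
  have hedge : ∀ e ∈ M.edgeSet, ∀ x ∈ e, e = s(x, f x) := by
    intro e he
    induction e using Sym2.ind with
    | _ u u' =>
      intro x hx
      rw [SimpleGraph.Subgraph.mem_edgeSet] at he
      rcases Sym2.mem_iff.mp hx with rfl | rfl
      · rw [← huniq he]
      · rw [← huniq he.symm, Sym2.eq_swap]
  -- choice of a covered endpoint of each M-edge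
  have hch : ∀ e ∈ M.edgeSet, ∃ x, x ∈ X ∧ x ∈ e := by
    intro e he
    induction e using Sym2.ind with
    | _ u u' =>
      rw [SimpleGraph.Subgraph.mem_edgeSet] at he
      rcases hX (M.adj_sub he) with h | h
      · exact ⟨u, h, by simp⟩
      · exact ⟨u', h, by simp⟩
  set c : Sym2 V → V := fun e => if he : e ∈ M.edgeSet then (hch e he).choose else v with hc
  have hcX : ∀ e (he : e ∈ M.edgeSet), c e ∈ X ∧ c e ∈ e := by
    intro e he
    simp only [hc, dif_pos he]
    exact (hch e he).choose_spec
  have hcinj : Set.InjOn c M.edgeSet := by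
    intro e he e' he' hee
    have h1 : c e ∈ e := (hcX e he).2
    have h2 : c e ∈ e' := hee ▸ (hcX e' he').2
    rw [hedge e he _ h1, hedge e' he' _ h2, hee]
  have hor : v ∈ X ∨ w ∈ X := hX (M.adj_sub hvw)
  have hvne : v ≠ w := (M.adj_sub hvw).ne
  have hnot : ¬(v ∈ X ∧ w ∈ X) := by
    rintro ⟨hvX, hwX⟩
    have he₀ : s(v, w) ∈ M.edgeSet := hvw
    obtain ⟨w', hw'X, hw'e, hw'ne⟩ :
        ∃ w', w' ∈ X ∧ w' ∈ s(v, w) ∧ c s(v, w) ≠ w' := by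
      rcases Sym2.mem_iff.mp (hcX _ he₀).2 with h | h
      · exact ⟨w, hwX, by simp, by rw [h]; exact hvne⟩
      · exact ⟨v, hvX, by simp, by rw [h]; exact hvne.symm⟩
    have hmaps : ∀ e ∈ M.edgeSet, c e ∈ X \ {w'} := by
      intro e he
      refine ⟨(hcX e he).1, ?_⟩
      intro hcw
      rw [Set.mem_singleton_iff] at hcw
      have h1 : e = s(w', f w') := hedge e he _ (hcw ▸ (hcX e he).2)
      have h2 : s(v, w) = s(w', f w') := hedge _ he₀ _ hw'e
      exact hw'ne ((h1.trans h2.symm) ▸ hcw)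
    have h1 : M.edgeSet.ncard ≤ (X \ {w'}).ncard :=
      Set.ncard_le_ncard_of_injOn c hmaps hcinj (Set.toFinite _)
    have h2 : (X \ {w'}).ncard < X.ncard :=
      Set.ncard_diff_singleton_lt_of_mem hw'X (Set.toFinite _)
    omega
  constructor
  · intro hv hw; exact hnot ⟨hv, hw⟩
  · intro hw; rcases hor with h | h
    · exact h
    · exact absurd h hw

/-- If `S` is a special subset (w.r.t. a perfect matching `M`) of a finite
connected bipartite graph `G` with bipartition `(A,B)` such that `G[S]` is
elementary, then every minimum vertex cover `X` of `G` satisfies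
`X ∩ S = A ∩ S` or `X ∩ S = B ∩ S`. -/
theorem stmt9 {V : Type*} [Fintype V] (G : SimpleGraph V) (A B : Set V)
    (hbip : IsBipartition G A B) (hconn : G.Connected)
    (M : G.Subgraph) (hM : M.IsPerfectMatching)
    (S : Set V) (hS : IsSpecialSubset G M S)
    (helem : IsElementary (G.induce S)) :
    ∀ X : Set V, IsMinVertexCover G X → X ∩ S = A ∩ S ∨ X ∩ S = B ∩ S := by
  classical
  intro X hX
  obtain ⟨hXcov, hXmin⟩ := hX
  obtain ⟨hdisj, hunion, hadjAB⟩ := hbip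
  obtain ⟨f, hf, huniq⟩ := pm_exists_partner hM
  have hAcov : _root_.IsVertexCover G A := fun u v h => (hadjAB h).imp And.left And.right
  have hcard : X.ncard ≤ A.ncard := hXmin A hAcov
  have hkey : ∀ ⦃v w⦄, M.Adj v w → (v ∈ X ↔ w ∉ X) :=
    fun v w h => cover_partner_iff ⟨hdisj, hunion, hadjAB⟩ hM hXcov hcard h
  have hmemB : ∀ v : V, v ∉ A → v ∈ B := by
    intro v hv
    have hm : v ∈ A ∪ B := hunion ▸ Set.mem_univ v
    rcases hm with h | h
    · exact absurd h hv
    · exact h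
  have hAB : ∀ a ∈ A, f a ∈ B := by
    intro a ha
    rcases hadjAB (M.adj_sub (hf a)) with ⟨_, h⟩ | ⟨h, _⟩
    · exact h
    · exact absurd h (Set.disjoint_left.mp hdisj ha)
  have hBA : ∀ b ∈ B, f b ∈ A := by
    intro b hb
    rcases hadjAB (M.adj_sub (hf b)) with ⟨h, _⟩ | ⟨_, h⟩
    · exact absurd hb (Set.disjoint_left.mp hdisj h)
    · exact h
  have hinvol : ∀ v : V, f (f v) = v := fun v => (huniq (hf v).symm).symm
  have hfS : ∀ v ∈ S, f v ∈ S := fun v hv => hS.2 hv (hf v)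
  haveI : Fintype ↥S := Fintype.ofFinite _
  set H := G.induce S with hH
  set A' : Set ↥S := Subtype.val ⁻¹' A with hA'
  set B' : Set ↥S := Subtype.val ⁻¹' B with hB'
  set X' : Set ↥S := Subtype.val ⁻¹' X with hX'
  have hHadj : ∀ ⦃u v : ↥S⦄, H.Adj u v → G.Adj ↑u ↑v := fun u v h => h
  have hbip' : IsBipartition H A' B' := by
    refine ⟨?_, ?_, fun u v h => hadjAB (hHadj h)⟩
    · rw [Set.disjoint_left]
      intro x hx hx'
      exact Set.disjoint_left.mp hdisj hx hx'
    · ext x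
      simp only [Set.mem_union, Set.mem_preimage, Set.mem_univ, iff_true]
      by_cases h : (x : V) ∈ A
      · exact Or.inl h
      · exact Or.inr (hmemB _ h)
  have hX'cov : _root_.IsVertexCover H X' := fun u v h => hXcov (hHadj h)
  have hXS_le : (X ∩ S).ncard ≤ (A ∩ S).ncard := by
    apply Set.ncard_le_ncard_of_injOn (fun x => if x ∈ A then x else f x) ?_ ?_ (Set.toFinite _)
    · rintro x ⟨hxX, hxS⟩
      by_cases hxA : x ∈ A
      · simp only [if_pos hxA]; exact ⟨hxA, hxS⟩
      · simp only [if_neg hxA]; exact ⟨hBA x (hmemB x hxA), hfS x hxS⟩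
    · rintro x ⟨hxX, hxS⟩ y ⟨hyX, hyS⟩ hxy
      by_cases hxA : x ∈ A <;> by_cases hyA : y ∈ A
      · simpa only [if_pos hxA, if_pos hyA] using hxy
      · simp only [if_pos hxA, if_neg hyA] at hxy
        exact absurd (hxy ▸ hxX) ((hkey (hf y)).mp hyX)
      · simp only [if_neg hxA, if_pos hyA] at hxy
        exact absurd (hxy ▸ hyX) ((hkey (hf x)).mp hxX)
      · simp only [if_neg hxA, if_neg hyA] at hxy
        have h2 := congrArg f hxy
        rwa [hinvol, hinvol] at h2
  have hcard' : X'.ncard ≤ A'.ncard := by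
    have h1 : X'.ncard = (X ∩ S).ncard := by
      rw [← Set.ncard_image_of_injective X' Subtype.val_injective,
        Subtype.image_preimage_coe, Set.inter_comm]
    have h2 : A'.ncard = (A ∩ S).ncard := by
      rw [← Set.ncard_image_of_injective A' Subtype.val_injective,
        Subtype.image_preimage_coe, Set.inter_comm]
    rw [h1, h2]; exact hXS_le
  have hHedge : ∀ ⦃u v : ↥S⦄, H.Adj u v → ((↑u : V) ∈ X ↔ (↑v : V) ∉ X) := by
    intro u v h
    have hor : (↑u : V) ∈ X ∨ (↑v : V) ∈ X := hXcov (hHadj h)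
    have hnot : ¬((↑u : V) ∈ X ∧ (↑v : V) ∈ X) := by
      rintro ⟨hu, hv⟩
      obtain ⟨M'', hM'', he⟩ := helem.2 s(u, v) h
      have hMadj : M''.Adj u v := he
      exact (cover_partner_iff hbip' hM'' hX'cov hcard' hMadj).mp hu hv
    constructor
    · intro h1 h2; exact hnot ⟨h1, h2⟩
    · intro h2; rcases hor with h1 | h1
      · exact h1
      · exact absurd h1 h2
  set st : ↥S → Prop := fun v => if (↑v : V) ∈ A then (↑v : V) ∈ X else (↑v : V) ∉ X with hst
  have hstedge : ∀ ⦃u v : ↥S⦄, H.Adj u v → (st u ↔ st v) := by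
    intro u v h
    rcases hadjAB (hHadj h) with ⟨huA, hvB⟩ | ⟨huB, hvA⟩
    · have hvA : (↑v : V) ∉ A := Set.disjoint_right.mp hdisj hvB
      simp only [hst, if_pos huA, if_neg hvA]
      exact hHedge h
    · have huA : (↑u : V) ∉ A := Set.disjoint_right.mp hdisj huB
      simp only [hst, if_neg huA, if_pos hvA]
      constructor
      · intro h1
        by_contra h2
        exact h1 ((hHedge h).mpr h2)
      · intro h1 h2
        exact (hHedge h).mp h2 h1
  have hreach : ∀ u v : ↥S, H.Reachable u v → (st u ↔ st v) := by
    intro u v hr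
    obtain ⟨p⟩ := hr
    induction p with
    | nil => exact Iff.rfl
    | cons h p ih => exact (hstedge h).trans ih
  have hconn' : H.Connected := helem.1
  obtain ⟨s₀⟩ := hconn'.nonempty
  have hstall : ∀ v : ↥S, st v ↔ st s₀ := fun v => hreach _ _ (hconn'.preconnected v s₀)
  by_cases hs₀ : st s₀
  · left
    ext x
    constructor
    · rintro ⟨hxX, hxS⟩
      refine ⟨?_, hxS⟩
      by_contra hxA
      have h1 : st ⟨x, hxS⟩ := (hstall ⟨x, hxS⟩).mpr hs₀
      simp only [hst, if_neg hxA] at h1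
      exact h1 hxX
    · rintro ⟨hxA, hxS⟩
      refine ⟨?_, hxS⟩
      have h1 : st ⟨x, hxS⟩ := (hstall ⟨x, hxS⟩).mpr hs₀
      simpa only [hst, if_pos hxA] using h1
  · right
    ext x
    constructor
    · rintro ⟨hxX, hxS⟩
      refine ⟨?_, hxS⟩
      have h1 : ¬ st ⟨x, hxS⟩ := fun h => hs₀ ((hstall ⟨x, hxS⟩).mp h)
      by_cases hxA : x ∈ A
      · simp only [hst, if_pos hxA] at h1
        exact absurd hxX h1
      · exact hmemB x hxA
    · rintro ⟨hxB, hxS⟩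
      refine ⟨?_, hxS⟩
      have hxA : x ∉ A := Set.disjoint_right.mp hdisj hxB
      have h1 : ¬ st ⟨x, hxS⟩ := fun h => hs₀ ((hstall ⟨x, hxS⟩).mp h)
      simp only [hst, if_neg hxA, not_not] at h1
      exact h1
end

section
/- Let G be a finite simple graph and let S and T both be minimum vertex covers of G. Then there exists a matching in G whose edges each have one endpoint in S\T and the other endpoint in T\S, and which saturates all of S\T and all of T\S (i.e., it induces a bijection between S\T and T\S along edges of G). -/
open SimpleGraph

/-- If `S` and `T` are both minimum vertex covers of a finite graph `G`, then
there is a matching of `G` between `S \ T` and `T \ S` saturating both, i.e., a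
bijection between `S \ T` and `T \ S` along edges of `G`. -/
theorem stmt11 {V : Type*} [Fintype V] (G : SimpleGraph V) (S T : Set V)
    (hS : IsMinVertexCover G S) (hT : IsMinVertexCover G T) :
    ∃ f : (S \ T : Set V) ≃ (T \ S : Set V),
      ∀ v : (S \ T : Set V), G.Adj v (f v) := by
  classical
  obtain ⟨hScov, hSmin⟩ := hS
  obtain ⟨hTcov, hTmin⟩ := hT
  have hST : S.ncard = T.ncard := le_antisymm (hSmin T hTcov) (hTmin S hScov)
  set t : ↥(S \ T) → Finset V :=
    fun x => Finset.univ.filter (fun v => v ∈ T \ S ∧ G.Adj ↑x v) with ht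
  have htmem : ∀ (x : ↥(S \ T)) (v : V), v ∈ t x ↔ v ∈ T \ S ∧ G.Adj ↑x v := by
    intro x v; simp [ht]
  have hall : ∀ s : Finset ↥(S \ T), s.card ≤ (s.biUnion t).card := by
    intro s
    set A : Set V := Subtype.val '' (↑s : Set ↥(S \ T)) with hA
    set N : Set V := ↑(s.biUnion t) with hN
    have hAS : A ⊆ S \ T := by rintro _ ⟨x, _, rfl⟩; exact x.2
    have hNmem : ∀ v, v ∈ N ↔ ∃ a ∈ s, v ∈ T \ S ∧ G.Adj ↑a v := by
      intro v
      simp only [hN, Finset.coe_biUnion, Set.mem_iUnion, Finset.mem_coe]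
      constructor
      · rintro ⟨a, ha, hv⟩; exact ⟨a, ha, (htmem a v).mp hv⟩
      · rintro ⟨a, ha, hv⟩; exact ⟨a, ha, (htmem a v).mpr hv⟩
    have hcov : _root_.IsVertexCover G ((S \ A) ∪ N) := by
      have key : ∀ u v : V, G.Adj u v → u ∈ A → v ∈ (S \ A) ∪ N := by
        intro u v huv huA
        have huST := hAS huA
        have hvT : v ∈ T := by
          rcases hTcov huv with h | h
          · exact absurd h huST.2
          · exact h
        by_cases hvS : v ∈ S
        · left
          refine ⟨hvS, fun hvA => (hAS hvA).2 hvT⟩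
        · right
          obtain ⟨x, hxs, rfl⟩ := huA
          exact (hNmem v).mpr ⟨x, hxs, ⟨hvT, hvS⟩, huv⟩
      intro u v huv
      rcases hScov huv with h | h
      · by_cases huA : u ∈ A
        · exact Or.inr (key u v huv huA)
        · exact Or.inl (Or.inl ⟨h, huA⟩)
      · by_cases hvA : v ∈ A
        · exact Or.inl (key v u huv.symm hvA)
        · exact Or.inr (Or.inl ⟨h, hvA⟩)
    have hcard := hSmin _ hcov
    have hAfin : A.Finite := Set.toFinite _
    have hAsub : A ⊆ S := fun x hx => (hAS hx).1
    have h1 : ((S \ A) ∪ N).ncard ≤ (S \ A).ncard + N.ncard := Set.ncard_union_le _ _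
    have h2 : (S \ A).ncard = S.ncard - A.ncard := Set.ncard_diff hAsub
    have h3 : A.ncard ≤ S.ncard := Set.ncard_le_ncard hAsub (Set.toFinite _)
    have h4 : A.ncard = s.card := by
      rw [hA, Set.ncard_image_of_injective _ Subtype.val_injective, Set.ncard_coe_finset]
    have h5 : N.ncard = (s.biUnion t).card := Set.ncard_coe_finset _
    omega
  obtain ⟨f, hfinj, hf⟩ := (Finset.all_card_le_biUnion_card_iff_exists_injective t).mp hall
  have hf' : ∀ x, f x ∈ T \ S ∧ G.Adj ↑x (f x) := fun x => (htmem x (f x)).mp (hf x)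
  let g : ↥(S \ T) → ↥(T \ S) := fun x => ⟨f x, (hf' x).1⟩
  have hginj : Function.Injective g := fun a b hab => hfinj (congrArg Subtype.val hab)
  have hcardeq : Fintype.card ↥(S \ T) = Fintype.card ↥(T \ S) := by
    have h1 : (S \ T).ncard = (T \ S).ncard :=
      (Set.ncard_eq_ncard_iff_ncard_diff_eq_ncard_diff (Set.toFinite _) (Set.toFinite _)).mp hST
    rw [← Nat.card_coe_set_eq, ← Nat.card_coe_set_eq, Nat.card_eq_fintype_card,
      Nat.card_eq_fintype_card] at h1
    exact h1
  have hbij : Function.Bijective g :=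
    (Fintype.bijective_iff_injective_and_card g).mpr ⟨hginj, hcardeq⟩
  exact ⟨Equiv.ofBijective g hbij, fun v => (hf' v).2⟩
end

section
/- Let G be a finite simple graph, let S and T be vertex covers of G, and let A ⊆ S\T. Then (S\A) ∪ (N(A) ∩ (T\S)) is a vertex cover of G, where N(A) denotes the set of vertices of G adjacent to at least one vertex of A. -/
open SimpleGraph

/-- If `S` and `T` are vertex covers of a finite graph `G` and `A ⊆ S \ T`,
then `(S \ A) ∪ (N(A) ∩ (T \ S))` is a vertex cover of `G`. -/
theorem stmt12 {V : Type*} [Fintype V] (G : SimpleGraph V) (S T : Set V)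
    (hS : _root_.IsVertexCover G S) (hT : _root_.IsVertexCover G T)
    (A : Set V) (hA : A ⊆ S \ T) :
    _root_.IsVertexCover G ((S \ A) ∪ ({v : V | ∃ a ∈ A, G.Adj a v} ∩ (T \ S))) := by
  intro u v huv
  have key : ∀ x y : V, G.Adj x y → x ∈ A →
      y ∈ (S \ A) ∪ ({v : V | ∃ a ∈ A, G.Adj a v} ∩ (T \ S)) := by
    intro x y hxy hxA
    have hxT : x ∉ T := (hA hxA).2
    have hyT : y ∈ T := (hT hxy).resolve_left hxT
    by_cases hyS : y ∈ S
    · left; exact ⟨hyS, fun hyA => (hA hyA).2 hyT⟩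
    · right; exact ⟨⟨x, hxA, hxy⟩, hyT, hyS⟩
  rcases hS huv with hu | hv
  · by_cases huA : u ∈ A
    · right; exact key u v huv huA
    · left; left; exact ⟨hu, huA⟩
  · by_cases hvA : v ∈ A
    · left; exact key v u huv.symm hvA
    · right; left; exact ⟨hv, hvA⟩
end
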